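/- arXiv:0709.0283 — 3 statements merged into one kernel-verified Lean document; each statement's English description precedes it below -/
import Mathlib

section
/- Suppose Σ ∈ P(X) is an irreducible collection of partial splits of X and C is an X-cycle. Then Σ is displayed by C if and only if the split closure ⟨Σ⟩_{θ_{M/Y}} of Σ with respect to the combined M/Y-rule is displayed by C. In that case the split closures ⟨Σ⟩_{θ_Y} and ⟨Σ⟩_{θ_M} are also displayed by C. -/
/-!
Common definitions: partial splits of a finite set `X`, modelled as unordered
pairs (`Sym2`) of nonempty disjoint subsets of `X`; the `M`-, `Y`- and `Z`-
closure rules; weak compatibility; `X`-cycles and display; split closure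
sequences and split closures.
-/

variable {X : Type*}

/-- `S` is a partial split of `X`: an unordered pair of nonempty disjoint subsets of `X`. -/
def IsPartialSplit (S : Sym2 (Set X)) : Prop :=
  ∃ A B : Set X, S = s(A, B) ∧ A.Nonempty ∧ B.Nonempty ∧ Disjoint A B

/-- `S` is a full split of `X`: a partial split whose two parts cover `X`. -/
def IsFullSplit (S : Sym2 (Set X)) : Prop :=
  ∃ A B : Set X, S = s(A, B) ∧ A.Nonempty ∧ B.Nonempty ∧ Disjoint A B ∧ A ∪ B = Set.univ

/-- The partial split `S` extends the partial split `T`. -/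
def SplitExtends (S T : Sym2 (Set X)) : Prop :=
  ∃ A B C D : Set X, S = s(A, B) ∧ T = s(C, D) ∧ C ⊆ A ∧ D ⊆ B

/-- `Sig ⪯ Sig'`: every partial split of `Sig` is extended by one of `Sig'`. -/
def Preceq (Sig Sig' : Set (Sym2 (Set X))) : Prop :=
  ∀ S ∈ Sig, ∃ T ∈ Sig', SplitExtends T S

/-- `Sig⁻`: the set obtained from `Sig` by removing all redundant partial splits,
i.e. those extended by a different element of `Sig`. -/
def sreduce (Sig : Set (Sym2 (Set X))) : Set (Sym2 (Set X)) :=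
  {S | S ∈ Sig ∧ ¬ ∃ T ∈ Sig, T ≠ S ∧ SplitExtends T S}

/-- `Sig ∈ P(X)`: `Sig` is an irreducible collection of partial splits of `X`. -/
def InPX (Sig : Set (Sym2 (Set X))) : Prop :=
  (∀ S ∈ Sig, IsPartialSplit S) ∧ sreduce Sig = Sig

/-- Two partial splits are compatible if some part of one is disjoint from some part
of the other. -/
def SplitCompatible (S T : Sym2 (Set X)) : Prop :=
  ∃ A B C D : Set X, S = s(A, B) ∧ T = s(C, D) ∧ A ∩ C = ∅

/-- Weak compatibility of a (multi)triple of partial splits: for every choice of parts,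
one of the four distinguished triple intersections is empty. -/
def WeaklyCompatTriple (S1 S2 S3 : Sym2 (Set X)) : Prop :=
  ∀ A1 B1 A2 B2 A3 B3 : Set X,
    S1 = s(A1, B1) → S2 = s(A2, B2) → S3 = s(A3, B3) →
    A1 ∩ A2 ∩ A3 = ∅ ∨ B1 ∩ B2 ∩ A3 = ∅ ∨ B1 ∩ A2 ∩ B3 = ∅ ∨ A1 ∩ B2 ∩ B3 = ∅

/-- A collection of partial splits is weakly compatible if every three of its members are. -/
def WeaklyCompatible (Sig : Set (Sym2 (Set X))) : Prop :=
  ∀ S1 ∈ Sig, ∀ S2 ∈ Sig, ∀ S3 ∈ Sig, WeaklyCompatTriple S1 S2 S3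

/-- Condition of the `M`-rule for the parts `A1|B1`, `A2|B2`. -/
def mCond (A1 B1 A2 B2 : Set X) : Prop :=
  (A1 ∩ A2).Nonempty ∧ (B1 ∩ B2).Nonempty

/-- Output of the `M`-rule applied with respect to the parts `A1|B1`, `A2|B2`. -/
def mOut (A1 B1 A2 B2 : Set X) : Set (Sym2 (Set X)) :=
  {s(A1, B1), s(A2, B2), s(A1 ∩ A2, B1 ∪ B2), s(B1 ∩ B2, A1 ∪ A2)}

/-- Condition of the `Y`-rule for the parts `A1|B1`, `A2|B2`, `A3|B3`. -/
def yCond (A1 B1 A2 B2 A3 B3 : Set X) : Prop :=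
  (A1 ∩ A2 ∩ A3).Nonempty ∧ (B1 ∩ B2 ∩ A3).Nonempty ∧
    (B1 ∩ A2 ∩ B3).Nonempty ∧ A1 ∩ B2 ∩ B3 = ∅

/-- Output of the `Y`-rule applied with respect to the parts `A1|B1`, `A2|B2`, `A3|B3`. -/
def yOut (A1 B1 A2 B2 A3 B3 : Set X) : Set (Sym2 (Set X)) :=
  {s(B1 ∪ (B2 ∩ B3), A1), s(A2 ∪ (A1 ∩ B3), B2), s(A3 ∪ (A1 ∩ B2), B3)}

/-- Condition of the `Z`-rule for the parts `A1|B1`, `A2|B2`. -/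
def zCond (A1 B1 A2 B2 : Set X) : Prop :=
  (A1 ∩ A2).Nonempty ∧ (A2 ∩ B1).Nonempty ∧ (B1 ∩ B2).Nonempty ∧ A1 ∩ B2 = ∅

/-- Output of the `Z`-rule applied with respect to the parts `A1|B1`, `A2|B2`. -/
def zOut (A1 B1 A2 B2 : Set X) : Set (Sym2 (Set X)) :=
  {s(B1 ∪ B2, A1), s(B2, A1 ∪ A2)}

/-- `Sig'` is obtained from `Sig` by a single application of the `Y`-rule. -/
def yStep (Sig Sig' : Set (Sym2 (Set X))) : Prop :=
  ∃ A1 B1 A2 B2 A3 B3 : Set X,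
    s(A1, B1) ∈ Sig ∧ s(A2, B2) ∈ Sig ∧ s(A3, B3) ∈ Sig ∧
    s(A1, B1) ≠ s(A2, B2) ∧ s(A1, B1) ≠ s(A3, B3) ∧ s(A2, B2) ≠ s(A3, B3) ∧
    yCond A1 B1 A2 B2 A3 B3 ∧
    Sig' = sreduce (Sig ∪ yOut A1 B1 A2 B2 A3 B3)

/-- `Sig'` is obtained from `Sig` by a single application of the `M`-rule. -/
def mStep (Sig Sig' : Set (Sym2 (Set X))) : Prop :=
  ∃ A1 B1 A2 B2 : Set X,
    s(A1, B1) ∈ Sig ∧ s(A2, B2) ∈ Sig ∧ s(A1, B1) ≠ s(A2, B2) ∧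
    mCond A1 B1 A2 B2 ∧
    Sig' = sreduce (Sig ∪ mOut A1 B1 A2 B2)

/-- `Sig'` is obtained from `Sig` by a single non-trivial application of the `Y`-rule. -/
def yStepNT (Sig Sig' : Set (Sym2 (Set X))) : Prop :=
  ∃ A1 B1 A2 B2 A3 B3 : Set X,
    s(A1, B1) ∈ Sig ∧ s(A2, B2) ∈ Sig ∧ s(A3, B3) ∈ Sig ∧
    s(A1, B1) ≠ s(A2, B2) ∧ s(A1, B1) ≠ s(A3, B3) ∧ s(A2, B2) ≠ s(A3, B3) ∧
    yCond A1 B1 A2 B2 A3 B3 ∧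
    ¬ Preceq (sreduce (yOut A1 B1 A2 B2 A3 B3)) Sig ∧
    Sig' = sreduce (Sig ∪ yOut A1 B1 A2 B2 A3 B3)

/-- `Sig'` is obtained from `Sig` by a single non-trivial application of the `M`-rule. -/
def mStepNT (Sig Sig' : Set (Sym2 (Set X))) : Prop :=
  ∃ A1 B1 A2 B2 : Set X,
    s(A1, B1) ∈ Sig ∧ s(A2, B2) ∈ Sig ∧ s(A1, B1) ≠ s(A2, B2) ∧
    mCond A1 B1 A2 B2 ∧
    ¬ Preceq (sreduce (mOut A1 B1 A2 B2)) Sig ∧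
    Sig' = sreduce (Sig ∪ mOut A1 B1 A2 B2)

/-- `Sig` is closed under the `Y`-rule: every application of the `Y`-rule to `Sig` is trivial. -/
def yClosed (Sig : Set (Sym2 (Set X))) : Prop :=
  ∀ A1 B1 A2 B2 A3 B3 : Set X,
    s(A1, B1) ∈ Sig → s(A2, B2) ∈ Sig → s(A3, B3) ∈ Sig →
    s(A1, B1) ≠ s(A2, B2) → s(A1, B1) ≠ s(A3, B3) → s(A2, B2) ≠ s(A3, B3) →
    yCond A1 B1 A2 B2 A3 B3 →
    Preceq (sreduce (yOut A1 B1 A2 B2 A3 B3)) Sig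

/-- `Sig` is closed under the `M`-rule: every application of the `M`-rule to `Sig` is trivial. -/
def mClosed (Sig : Set (Sym2 (Set X))) : Prop :=
  ∀ A1 B1 A2 B2 : Set X,
    s(A1, B1) ∈ Sig → s(A2, B2) ∈ Sig → s(A1, B1) ≠ s(A2, B2) →
    mCond A1 B1 A2 B2 →
    Preceq (sreduce (mOut A1 B1 A2 B2)) Sig

/-- A split closure sequence for `Sig` of length `n` with respect to the property `P` and
the non-trivial single-application relation `stepNT`: a strictly `⪯`-increasing sequence
in `P(X)` starting at `Sig` in which every term satisfying `P` is followed by the result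
of one non-trivial application of the rule. -/
def IsClosureSeq (P : Set (Sym2 (Set X)) → Prop)
    (stepNT : Set (Sym2 (Set X)) → Set (Sym2 (Set X)) → Prop)
    (Sig : Set (Sym2 (Set X))) (n : ℕ) (f : ℕ → Set (Sym2 (Set X))) : Prop :=
  f 0 = Sig ∧ (∀ i ≤ n, InPX (f i)) ∧
    (∀ i < n, P (f i) ∧ stepNT (f i) (f (i + 1)) ∧
      Preceq (f i) (f (i + 1)) ∧ f i ≠ f (i + 1))

/-- `cl` is a split closure of `Sig` (with `cl = none` playing the role of `ω`):
the last element of a split closure sequence for `Sig`, which either satisfies `P` and is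
closed under the rule, or fails `P`, in which case it is replaced by `ω`. -/
def IsSplitClosure (P : Set (Sym2 (Set X)) → Prop)
    (stepNT : Set (Sym2 (Set X)) → Set (Sym2 (Set X)) → Prop)
    (closed : Set (Sym2 (Set X)) → Prop)
    (Sig : Set (Sym2 (Set X))) (cl : Option (Set (Sym2 (Set X)))) : Prop :=
  ∃ (n : ℕ) (f : ℕ → Set (Sym2 (Set X))),
    IsClosureSeq P stepNT Sig n f ∧
    ((P (f n) ∧ closed (f n) ∧ cl = some (f n)) ∨ (¬ P (f n) ∧ cl = none))

/-- Split closure with respect to the `Y`-rule, `(P)` being weak compatibility. -/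
def IsYClosure (Sig : Set (Sym2 (Set X))) (cl : Option (Set (Sym2 (Set X)))) : Prop :=
  IsSplitClosure WeaklyCompatible yStepNT yClosed Sig cl

/-- Split closure with respect to the `M`-rule, `(P)` holding for all collections. -/
def IsMClosure (Sig : Set (Sym2 (Set X))) (cl : Option (Set (Sym2 (Set X)))) : Prop :=
  IsSplitClosure (fun _ => True) mStepNT mClosed Sig cl

/-- Split closure with respect to the combined `M/Y`-rule, `(P)` being weak compatibility. -/
def IsMYClosure (Sig : Set (Sym2 (Set X))) (cl : Option (Set (Sym2 (Set X)))) : Prop :=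
  IsSplitClosure WeaklyCompatible
    (fun s s' => mStepNT s s' ∨ yStepNT s s') (fun s => mClosed s ∧ yClosed s) Sig cl

/-- `C` is an `X`-cycle: a connected graph on the vertex set `X` (`|X| ≥ 3`) in which
every vertex has degree `2`. -/
def IsXCycle (C : SimpleGraph X) : Prop :=
  C.Connected ∧ 3 ≤ Nat.card X ∧ ∀ v : X, (C.neighborSet v).ncard = 2

/-- The partial split `S` is displayed by the `X`-cycle `C`: there are two distinct
edges of `C` whose deletion leaves one component containing one part of `S` and
another component containing the other part. -/
def DisplaysSplit (C : SimpleGraph X) (S : Sym2 (Set X)) : Prop :=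
  ∃ A B : Set X, S = s(A, B) ∧
    ∃ e1 e2 : Sym2 X, e1 ∈ C.edgeSet ∧ e2 ∈ C.edgeSet ∧ e1 ≠ e2 ∧
      ∃ c1 c2 : (C.deleteEdges {e1, e2}).ConnectedComponent,
        c1 ≠ c2 ∧ A ⊆ c1.supp ∧ B ⊆ c2.supp

/-- A collection of partial splits is displayed by `C` if each of its members is. -/
def DisplaysColl (C : SimpleGraph X) (Sig : Set (Sym2 (Set X))) : Prop :=
  ∀ S ∈ Sig, DisplaysSplit C S

/-- `cl ≠ ω` and the underlying collection is displayed by `C`. -/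
def OptionDisplays (C : SimpleGraph X) (cl : Option (Set (Sym2 (Set X)))) : Prop :=
  ∃ Sig, cl = some Sig ∧ DisplaysColl C Sig

/-- The ground set `A ∪ B` of a partial split `A|B`. -/
def splitGround (S : Sym2 (Set X)) : Set X :=
  ⋃₀ {A : Set X | A ∈ S}

/-- Membership in `P_ω(X) = P(X) ∪ {ω}`. -/
def InPOmega (x : Option (Set (Sym2 (Set X)))) : Prop :=
  x = none ∨ ∃ Sig, x = some Sig ∧ InPX Sig

/-- The order `⪯` on `P_ω(X)`, with `Sig ⪯ ω` for all `Sig` and `ω ⪯ ω`. -/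
def PreceqO (x y : Option (Set (Sym2 (Set X)))) : Prop :=
  y = none ∨ ∃ Sig Sig', x = some Sig ∧ y = some Sig' ∧ Preceq Sig Sig'

/-- Split closure as a relation on `P_ω(X)`, with `⟨ω⟩ = ω`. -/
def ClosO (cls : Set (Sym2 (Set X)) → Option (Set (Sym2 (Set X))) → Prop)
    (x y : Option (Set (Sym2 (Set X)))) : Prop :=
  (x = none ∧ y = none) ∨ ∃ Sig, x = some Sig ∧ cls Sig y

/-!
A partial split `A|B` is displayed by the cycle `C` exactly when `A ⊆ I ⊆ Bᶜ` for an arc `I`,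
i.e. a proper nonempty vertex set with exactly two edges leaving it. In a connected graph with
even degrees every proper nonempty set has at least two leaving edges, so submodularity of the
cut function makes `I ∩ J` and `I ∪ J` arcs whenever they are proper and nonempty: this is the
`M`-rule. Counting edges once more shows that three arcs never realise the four patterns
forbidden by weak compatibility, which also yields the inclusion `I₁ ⊆ I₂ ∪ I₃` turning the
outputs of the `Y`-rule into arcs. So along a split closure sequence display is preserved and
forces weak compatibility (the closure is never `ω`), while conversely `Σ ⪯ ⟨Σ⟩` and display
descends along `⪯`.
-/

open Finset

namespace SimpleGraph

variable {V : Type*} [Fintype V] (G : SimpleGraph V)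

open Classical in
noncomputable def crossingPairs (S T : Set V) : Finset (V × V) :=
  {p | G.Adj p.1 p.2 ∧ p.1 ∈ S ∧ p.2 ∈ T}

noncomputable def cutSize (S : Set V) : ℕ :=
  #(G.crossingPairs S Sᶜ)

variable {G}

@[simp]
lemma mem_crossingPairs {S T : Set V} {p : V × V} :
    p ∈ G.crossingPairs S T ↔ G.Adj p.1 p.2 ∧ p.1 ∈ S ∧ p.2 ∈ T := by
  simp [crossingPairs]

lemma crossingPairs_mono {S T S' T' : Set V} (hS : S ⊆ S') (hT : T ⊆ T') :
    G.crossingPairs S T ⊆ G.crossingPairs S' T' := fun _ hp => by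
  rw [mem_crossingPairs] at hp ⊢
  exact ⟨hp.1, hS hp.2.1, hT hp.2.2⟩

@[simp]
lemma cutSize_empty : G.cutSize ∅ = 0 := by
  simp [cutSize, crossingPairs]

lemma card_crossingPairs_comm (S T : Set V) :
    #(G.crossingPairs S T) = #(G.crossingPairs T S) :=
  card_equiv (Equiv.prodComm V V) fun p => by
    simp only [mem_crossingPairs, Equiv.prodComm_apply, Prod.fst_swap, Prod.snd_swap]
    exact ⟨fun h => ⟨h.1.symm, h.2.2, h.2.1⟩, fun h => ⟨h.1.symm, h.2.2, h.2.1⟩⟩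

lemma cutSize_compl (S : Set V) : G.cutSize Sᶜ = G.cutSize S := by
  rw [cutSize, cutSize, compl_compl, card_crossingPairs_comm]

open Classical in
lemma card_crossingPairs_eq_sum (S T : Set V) :
    #(G.crossingPairs S T) = ∑ p : V × V, if G.Adj p.1 p.2 ∧ p.1 ∈ S ∧ p.2 ∈ T then 1 else 0 := by
  rw [crossingPairs, card_filter]

lemma cutSize_inter_add_cutSize_union (S T : Set V) :
    G.cutSize (S ∩ T) + G.cutSize (S ∪ T) + 2 * #(G.crossingPairs (S \ T) (T \ S)) =
      G.cutSize S + G.cutSize T := by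
  classical
  rw [two_mul]
  nth_rw 2 [card_crossingPairs_comm]
  simp only [cutSize, card_crossingPairs_eq_sum, ← sum_add_distrib]
  refine sum_congr rfl fun p _ => ?_
  by_cases h : G.Adj p.1 p.2 <;> by_cases h1 : p.1 ∈ S <;> by_cases h2 : p.1 ∈ T <;>
    by_cases h3 : p.2 ∈ S <;> by_cases h4 : p.2 ∈ T <;> simp [h, h1, h2, h3, h4]

lemma cutSize_pos (hconn : G.Connected) {S : Set V} (hS : S.Nonempty) (hSc : Sᶜ.Nonempty) :
    0 < G.cutSize S := by
  obtain ⟨u, hu⟩ := hS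
  obtain ⟨v, hv⟩ := hSc
  obtain ⟨d, -, hd⟩ := (hconn.preconnected u v).some.exists_boundary_dart S hu hv
  exact card_pos.mpr ⟨(d.fst, d.snd), mem_crossingPairs.mpr ⟨d.adj, hd⟩⟩

lemma even_card_crossingPairs_self (S : Set V) : Even #(G.crossingPairs S S) := by
  classical
  let H := ((⊤ : G.Subgraph).induce S).spanningCoe
  have hH : G.crossingPairs S S = ({p : V × V | H.Adj p.1 p.2} : Finset (V × V)) := by
    ext p
    simp [H, and_comm, and_assoc]
  have h := even_two_mul #H.edgeFinset
  rw [two_mul_card_edgeFinset] at h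
  rw [hH]
  convert h using 3

lemma even_cutSize [DecidableRel G.Adj] (heven : ∀ v, Even (G.degree v)) (S : Set V) :
    Even (G.cutSize S) := by
  classical
  have hsplit : #(G.crossingPairs S S) + G.cutSize S = ∑ v, if v ∈ S then G.degree v else 0 := by
    simp only [cutSize, card_crossingPairs_eq_sum, ← sum_add_distrib, Fintype.sum_prod_type]
    refine sum_congr rfl fun u _ => ?_
    split_ifs with hu
    · rw [← card_neighborFinset_eq_degree, neighborFinset_eq_filter, card_filter]
      refine sum_congr rfl fun v _ => ?_
      by_cases hv : v ∈ S <;> simp [hu, hv]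
    · simp [hu]
  have hsum : Even (∑ v, if v ∈ S then G.degree v else 0) :=
    even_sum _ fun v _ => by split_ifs; exacts [heven v, Even.zero]
  rw [← hsplit] at hsum
  exact (Nat.even_add.mp hsum).mp (even_card_crossingPairs_self S)

variable (G) in
def IsTwoEdgeConnected : Prop :=
  ∀ S : Set V, S.Nonempty → Sᶜ.Nonempty → 2 ≤ G.cutSize S

lemma isTwoEdgeConnected_of_even_degree [DecidableRel G.Adj] (hconn : G.Connected)
    (heven : ∀ v, Even (G.degree v)) : G.IsTwoEdgeConnected := by
  intro S hS hSc
  obtain ⟨k, hk⟩ := even_cutSize heven S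
  have := cutSize_pos hconn hS hSc
  omega

variable (G) in
def IsArc (I : Set V) : Prop :=
  I.Nonempty ∧ Iᶜ.Nonempty ∧ G.cutSize I = 2

lemma IsArc.compl {I : Set V} (h : G.IsArc I) : G.IsArc Iᶜ :=
  ⟨h.2.1, by rw [compl_compl]; exact h.1, by rw [cutSize_compl]; exact h.2.2⟩

lemma IsArc.inter_union (hG : G.IsTwoEdgeConnected) {I J : Set V} (hI : G.IsArc I)
    (hJ : G.IsArc J) (hIJ : (I ∩ J).Nonempty) (hIJc : (I ∪ J)ᶜ.Nonempty) :
    G.IsArc (I ∩ J) ∧ G.IsArc (I ∪ J) ∧ G.crossingPairs (I \ J) (J \ I) = ∅ := by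
  have hIJ' : I ∩ J ⊆ I ∪ J := Set.inter_subset_left.trans Set.subset_union_left
  have hcompl : (I ∩ J)ᶜ.Nonempty := hIJc.mono (Set.compl_subset_compl.mpr hIJ')
  have hunion : (I ∪ J).Nonempty := hIJ.mono hIJ'
  have hsub := cutSize_inter_add_cutSize_union (G := G) I J
  have h1 := hG _ hIJ hcompl
  have h2 := hG _ hunion hIJc
  rw [hI.2.2, hJ.2.2] at hsub
  exact ⟨⟨hIJ, hcompl, by omega⟩, ⟨hunion, hIJc, by omega⟩, card_eq_zero.mp (by omega)⟩

lemma IsArc.crossingPairs_nonempty (hG : G.IsTwoEdgeConnected) {I S T : Set V}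
    (hI : G.IsArc I) (hST : S ∪ T = I) (hdisj : Disjoint S T) (hS : S.Nonempty)
    (hT : T.Nonempty) : (G.crossingPairs S T).Nonempty := by
  have hsub := cutSize_inter_add_cutSize_union (G := G) S T
  rw [hdisj.inter_eq, hdisj.sdiff_eq_left, hdisj.symm.sdiff_eq_left, hST, hI.2.2,
    cutSize_empty] at hsub
  have h1 := hG S hS (hT.mono hdisj.symm.subset_compl_right)
  have h2 := hG T hT (hS.mono hdisj.subset_compl_right)
  exact card_pos.mp (by omega)

lemma IsArc.inter_compl_compl_eq_empty (hG : G.IsTwoEdgeConnected) {I₁ I₂ I₃ : Set V}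
    (h₁ : G.IsArc I₁) (h₂ : G.IsArc I₂) (h₃ : G.IsArc I₃)
    (hp : (I₁ ∩ I₂ ∩ I₃).Nonempty) (hq : (I₁ᶜ ∩ I₂ᶜ ∩ I₃).Nonempty)
    (hr : (I₁ᶜ ∩ I₂ ∩ I₃ᶜ).Nonempty) : I₁ ∩ I₂ᶜ ∩ I₃ᶜ = ∅ := by
  rw [← Set.not_nonempty_iff_eq_empty]
  rintro ⟨x, ⟨hx₁, hx₂ : x ∉ I₂⟩, hx₃ : x ∉ I₃⟩
  obtain ⟨p, ⟨hp₁, hp₂⟩, hp₃⟩ := hp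
  obtain ⟨q, ⟨hq₁ : q ∉ I₁, hq₂ : q ∉ I₂⟩, hq₃⟩ := hq
  obtain ⟨r, ⟨hr₁ : r ∉ I₁, hr₂⟩, hr₃ : r ∉ I₃⟩ := hr
  -- `I₂` and `I₃` cross, so no edge joins `I₂ \ I₃` to `I₃ \ I₂`
  obtain ⟨hP, hU, hQR⟩ := h₂.inter_union hG h₃ ⟨p, hp₂, hp₃⟩ ⟨x, by simp [hx₂, hx₃]⟩
  obtain ⟨-, hW₀, -⟩ := h₁.inter_union hG hP ⟨p, hp₁, hp₂, hp₃⟩ ⟨q, by simp [hq₁, hq₂]⟩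
  obtain ⟨-, hW, -⟩ := hW₀.inter_union hG hU.compl ⟨x, Or.inl hx₁, by simp [hx₂, hx₃]⟩
    ⟨q, by simp [hq₁, hq₂, hq₃]⟩
  -- the complement of the arc `W = I₁ ∪ (I₂ ∩ I₃) ∪ (I₂ ∪ I₃)ᶜ` falls apart into two pieces
  set W := I₁ ∪ I₂ ∩ I₃ ∪ (I₂ ∪ I₃)ᶜ
  obtain ⟨e, he⟩ := hW.compl.crossingPairs_nonempty hG (S := Wᶜ ∩ (I₂ \ I₃))
    (T := Wᶜ ∩ (I₃ \ I₂)) (by ext y; simp [W]; tauto)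
    (disjoint_sdiff_sdiff.mono Set.inter_subset_right Set.inter_subset_right)
    ⟨r, by simp [W, hr₁, hr₂, hr₃]⟩ ⟨q, by simp [W, hq₁, hq₂, hq₃]⟩
  simpa [hQR] using crossingPairs_mono Set.inter_subset_right Set.inter_subset_right he

lemma IsArc.reachable (hG : G.IsTwoEdgeConnected) {I : Set V} (hI : G.IsArc I)
    {H : SimpleGraph V} (hH : ∀ a ∈ I, ∀ b ∈ I, G.Adj a b → H.Adj a b) {u v : V}
    (hu : u ∈ I) (hv : v ∈ I) : H.Reachable u v := by
  by_contra huv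
  set K := {w | w ∈ I ∧ H.Reachable u w}
  obtain ⟨⟨a, b⟩, hab⟩ := hI.crossingPairs_nonempty hG (S := K) (T := I \ K)
    (Set.union_sdiff_cancel fun _ hw => hw.1) Set.disjoint_sdiff_right ⟨u, hu, .rfl⟩
    ⟨v, hv, fun h => huv h.2⟩
  obtain ⟨hab, ⟨haI, hua⟩, hbI, hbK⟩ := mem_crossingPairs.mp hab
  exact hbK ⟨hbI, hua.trans (hH a haI b hbI hab).reachable⟩

lemma injOn_crossingPairs_compl (S : Set V) :
    Set.InjOn (fun p : V × V => s(p.1, p.2)) (G.crossingPairs S Sᶜ) := by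
  rintro ⟨a, b⟩ hab ⟨c, d⟩ hcd h
  obtain ⟨-, ha, -⟩ := mem_crossingPairs.mp hab
  obtain ⟨-, -, hd⟩ := mem_crossingPairs.mp hcd
  rcases Sym2.eq_iff.mp h with ⟨rfl, rfl⟩ | ⟨rfl, -⟩
  · rfl
  · exact absurd ha hd

lemma cutSize_le_card (E : Finset (Sym2 V)) {S : Set V}
    (h : ∀ u v, G.Adj u v → u ∈ S → v ∉ S → s(u, v) ∈ E) : G.cutSize S ≤ #E :=
  card_le_card_of_injOn _
    (fun _ hp => h _ _ (mem_crossingPairs.mp hp).1 (mem_crossingPairs.mp hp).2.1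
      (mem_crossingPairs.mp hp).2.2)
    (injOn_crossingPairs_compl S)

lemma isArc_supp_of_ne (hG : G.IsTwoEdgeConnected) {e₁ e₂ : Sym2 V}
    {k k' : (G.deleteEdges {e₁, e₂}).ConnectedComponent} (h : k ≠ k') : G.IsArc k.supp := by
  classical
  have hcompl : k.suppᶜ.Nonempty := k'.nonempty_supp.mono
    (pairwise_disjoint_supp_connectedComponent _ h).subset_compl_left
  refine ⟨k.nonempty_supp, hcompl, le_antisymm ?_ (hG _ k.nonempty_supp hcompl)⟩
  refine (cutSize_le_card {e₁, e₂} fun u v huv hu hv => ?_).trans card_le_two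
  by_contra he
  exact hv ((k.mem_supp_congr_adj ((deleteEdges_adj ..).mpr ⟨huv, by simpa using he⟩)).mp hu)

end SimpleGraph

open SimpleGraph

section Display

variable {C : SimpleGraph X}

lemma DisplaysSplit.mono {A B A' B' : Set X} (h : DisplaysSplit C s(A, B)) (hA : A' ⊆ A)
    (hB : B' ⊆ B) : DisplaysSplit C s(A', B') := by
  obtain ⟨A₀, B₀, hAB, e₁, e₂, he₁, he₂, he, k, k', hk, hA₀, hB₀⟩ := h
  rcases Sym2.eq_iff.mp hAB with ⟨rfl, rfl⟩ | ⟨rfl, rfl⟩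
  · exact ⟨A', B', rfl, e₁, e₂, he₁, he₂, he, k, k', hk, hA.trans hA₀, hB.trans hB₀⟩
  · exact ⟨A', B', rfl, e₁, e₂, he₁, he₂, he, k', k, hk.symm, hA.trans hB₀, hB.trans hA₀⟩

lemma DisplaysColl.of_preceq {Sig Sig' : Set (Sym2 (Set X))} (h : Preceq Sig Sig')
    (hd : DisplaysColl C Sig') : DisplaysColl C Sig := by
  intro S hS
  obtain ⟨T, hT, A, B, A', B', rfl, rfl, hA, hB⟩ := h S hS
  exact (hd _ hT).mono hA hB

lemma IsSplitClosure.optionDisplays {P : Set (Sym2 (Set X)) → Prop}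
    {stepNT : Set (Sym2 (Set X)) → Set (Sym2 (Set X)) → Prop}
    {closed : Set (Sym2 (Set X)) → Prop} {Sig : Set (Sym2 (Set X))}
    {cl : Option (Set (Sym2 (Set X)))} (hcl : IsSplitClosure P stepNT closed Sig cl)
    (hstep : ∀ T T', DisplaysColl C T → stepNT T T' → DisplaysColl C T')
    (hP : ∀ T, DisplaysColl C T → P T) (hd : DisplaysColl C Sig) : OptionDisplays C cl := by
  obtain ⟨n, f, ⟨hf₀, -, hsteps⟩, hend⟩ := hcl
  have hf : ∀ i ≤ n, DisplaysColl C (f i) := by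
    intro i
    induction i with
    | zero => exact fun _ => hf₀ ▸ hd
    | succ i ih => exact fun hi => hstep _ _ (ih (by omega)) (hsteps i (by omega)).2.1
  rcases hend with ⟨-, -, rfl⟩ | ⟨hnP, -⟩
  · exact ⟨f n, rfl, hf n le_rfl⟩
  · exact absurd (hP _ (hf n le_rfl)) hnP

lemma IsSplitClosure.displaysColl_of_optionDisplays {P : Set (Sym2 (Set X)) → Prop}
    {stepNT : Set (Sym2 (Set X)) → Set (Sym2 (Set X)) → Prop}
    {closed : Set (Sym2 (Set X)) → Prop} {Sig : Set (Sym2 (Set X))}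
    {cl : Option (Set (Sym2 (Set X)))} (hcl : IsSplitClosure P stepNT closed Sig cl)
    (hd : OptionDisplays C cl) : DisplaysColl C Sig := by
  obtain ⟨n, f, ⟨rfl, -, hsteps⟩, hend⟩ := hcl
  obtain ⟨T, hT, hdT⟩ := hd
  have hfn : DisplaysColl C (f n) := by
    rcases hend with ⟨-, -, rfl⟩ | ⟨-, rfl⟩
    · exact Option.some_injective _ hT ▸ hdT
    · cases hT
  exact Nat.decreasingInduction (motive := fun i _ => DisplaysColl C (f i))
    (fun i hi hsucc => hsucc.of_preceq (hsteps i hi).2.2.1) hfn (Nat.zero_le n)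

section Finite

variable [Fintype X]

lemma exists_isArc_of_displaysSplit (hC : C.IsTwoEdgeConnected) {A B : Set X}
    (h : DisplaysSplit C s(A, B)) : ∃ I, C.IsArc I ∧ A ⊆ I ∧ B ⊆ Iᶜ := by
  obtain ⟨A', B', hAB, e₁, e₂, -, -, -, k, k', hk, hA', hB'⟩ := h
  have hdisj := pairwise_disjoint_supp_connectedComponent _ hk
  rcases Sym2.eq_iff.mp hAB with ⟨rfl, rfl⟩ | ⟨rfl, rfl⟩
  · exact ⟨k.supp, isArc_supp_of_ne hC hk, hA', hB'.trans hdisj.subset_compl_left⟩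
  · exact ⟨k'.supp, isArc_supp_of_ne hC hk.symm, hB', hA'.trans hdisj.symm.subset_compl_left⟩

lemma displaysSplit_of_isArc (hC : C.IsTwoEdgeConnected) {I A B : Set X} (hI : C.IsArc I)
    (hA : A.Nonempty) (hB : B.Nonempty) (hAI : A ⊆ I) (hBI : B ⊆ Iᶜ) :
    DisplaysSplit C s(A, B) := by
  classical
  obtain ⟨x, y, hxy, hcut⟩ := card_eq_two.mp hI.2.2
  have hx : x ∈ C.crossingPairs I Iᶜ := hcut ▸ mem_insert_self x {y}
  have hy : y ∈ C.crossingPairs I Iᶜ := hcut ▸ mem_insert_of_mem (mem_singleton_self y)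
  set D := C.deleteEdges {s(x.1, x.2), s(y.1, y.2)}
  have hleave : ∀ u v, D.Adj u v → u ∈ I → v ∈ I := by
    intro u v huv hu
    by_contra hv
    have huv' : (u, v) ∈ C.crossingPairs I Iᶜ :=
      mem_crossingPairs.mpr ⟨(deleteEdges_adj.mp huv).1, hu, hv⟩
    rw [hcut, mem_insert, mem_singleton] at huv'
    refine (deleteEdges_adj.mp huv).2 ?_
    rcases huv' with h | h <;> simp [← h]
  have hstay : ∀ u v, C.Adj u v → (u ∈ I ↔ v ∈ I) → D.Adj u v := by
    intro u v huv hside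
    refine deleteEdges_adj.mpr ⟨huv, fun he => ?_⟩
    have hcross : ∀ z ∈ C.crossingPairs I Iᶜ, s(u, v) = s(z.1, z.2) → False := by
      intro z hz he
      obtain ⟨-, hz₁, hz₂⟩ := mem_crossingPairs.mp hz
      rcases Sym2.eq_iff.mp he with ⟨rfl, rfl⟩ | ⟨rfl, rfl⟩ <;> simp_all
    rcases he with he | he
    exacts [hcross x hx he, hcross y hy he]
  obtain ⟨a, ha⟩ := hA
  obtain ⟨b, hb⟩ := hB
  refine ⟨A, B, rfl, _, _, (mem_crossingPairs.mp hx).1, (mem_crossingPairs.mp hy).1,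
    fun h => hxy (injOn_crossingPairs_compl I hx hy h),
    D.connectedComponentMk a, D.connectedComponentMk b, fun h => ?_, fun a' ha' => ?_,
    fun b' hb' => ?_⟩
  · obtain ⟨d, -, hd₁, hd₂⟩ :=
      (ConnectedComponent.exact h).some.exists_boundary_dart I (hAI ha) (hBI hb)
    exact hd₂ (hleave _ _ d.adj hd₁)
  · exact ConnectedComponent.sound (hI.reachable hC
      (fun u hu v hv huv => hstay u v huv (iff_of_true hu hv)) (hAI ha') (hAI ha))
  · exact ConnectedComponent.sound (hI.compl.reachable hC
      (fun u hu v hv huv => hstay u v huv (iff_of_false hu hv)) (hBI hb') (hBI hb))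

lemma displaysColl_mOut (hC : C.IsTwoEdgeConnected) {A₁ B₁ A₂ B₂ : Set X}
    (h₁ : DisplaysSplit C s(A₁, B₁)) (h₂ : DisplaysSplit C s(A₂, B₂))
    (hm : mCond A₁ B₁ A₂ B₂) : DisplaysColl C (mOut A₁ B₁ A₂ B₂) := by
  obtain ⟨I₁, hI₁, hA₁, hB₁⟩ := exists_isArc_of_displaysSplit hC h₁
  obtain ⟨I₂, hI₂, hA₂, hB₂⟩ := exists_isArc_of_displaysSplit hC h₂
  obtain ⟨hAA, hBB⟩ := hm
  have hBB' : B₁ ∩ B₂ ⊆ (I₁ ∪ I₂)ᶜ := by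
    rw [Set.compl_union]; exact Set.inter_subset_inter hB₁ hB₂
  obtain ⟨hinter, hunion, -⟩ :=
    hI₁.inter_union hC hI₂ (hAA.mono (Set.inter_subset_inter hA₁ hA₂)) (hBB.mono hBB')
  rintro S (rfl | rfl | rfl | rfl)
  · exact h₁
  · exact h₂
  · refine displaysSplit_of_isArc hC hinter hAA (hBB.mono fun x hx => Or.inl hx.1)
      (Set.inter_subset_inter hA₁ hA₂) ?_
    rw [Set.compl_inter]; exact Set.union_subset_union hB₁ hB₂
  · refine displaysSplit_of_isArc hC hunion.compl hBB (hAA.mono fun x hx => Or.inl hx.1) hBB' ?_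
    rw [compl_compl]; exact Set.union_subset_union hA₁ hA₂

lemma displaysColl_yOut (hC : C.IsTwoEdgeConnected) {A₁ B₁ A₂ B₂ A₃ B₃ : Set X}
    (h₁ : DisplaysSplit C s(A₁, B₁)) (h₂ : DisplaysSplit C s(A₂, B₂))
    (h₃ : DisplaysSplit C s(A₃, B₃)) (hy : yCond A₁ B₁ A₂ B₂ A₃ B₃) :
    DisplaysColl C (yOut A₁ B₁ A₂ B₂ A₃ B₃) := by
  obtain ⟨I₁, hI₁, hA₁, hB₁⟩ := exists_isArc_of_displaysSplit hC h₁
  obtain ⟨I₂, hI₂, hA₂, hB₂⟩ := exists_isArc_of_displaysSplit hC h₂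
  obtain ⟨I₃, hI₃, hA₃, hB₃⟩ := exists_isArc_of_displaysSplit hC h₃
  obtain ⟨hp, hq, hr, -⟩ := hy
  have hcover : I₁ ∩ I₂ᶜ ∩ I₃ᶜ = ∅ := hI₁.inter_compl_compl_eq_empty hC hI₂ hI₃
    (hp.mono (Set.inter_subset_inter (Set.inter_subset_inter hA₁ hA₂) hA₃))
    (hq.mono (Set.inter_subset_inter (Set.inter_subset_inter hB₁ hB₂) hA₃))
    (hr.mono (Set.inter_subset_inter (Set.inter_subset_inter hB₁ hA₂) hB₃))
  have hcover₂ : ∀ x ∈ I₁, x ∉ I₃ → x ∈ I₂ := fun x hx₁ hx₃ => by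
    by_contra hx₂; exact hcover.subset ⟨⟨hx₁, hx₂⟩, hx₃⟩
  have hcover₃ : ∀ x ∈ I₁, x ∉ I₂ → x ∈ I₃ := fun x hx₁ hx₂ => by
    by_contra hx₃; exact hcover.subset ⟨⟨hx₁, hx₂⟩, hx₃⟩
  rintro S (rfl | rfl | rfl)
  · refine displaysSplit_of_isArc hC hI₁.compl (hq.mono fun x hx => Or.inl hx.1.1)
      (hp.mono fun x hx => hx.1.1) ?_ (by rw [compl_compl]; exact hA₁)
    rintro x (hx | ⟨hx₂, hx₃⟩) hx₁
    · exact hB₁ hx hx₁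
    · exact hB₂ hx₂ (hcover₂ x hx₁ (hB₃ hx₃))
  · refine displaysSplit_of_isArc hC hI₂ (hp.mono fun x hx => Or.inl hx.1.2)
      (hq.mono fun x hx => hx.1.2) ?_ hB₂
    rintro x (hx | ⟨hx₁, hx₃⟩)
    · exact hA₂ hx
    · exact hcover₂ x (hA₁ hx₁) (hB₃ hx₃)
  · refine displaysSplit_of_isArc hC hI₃ (hp.mono fun x hx => Or.inl hx.2)
      (hr.mono fun x hx => hx.2) ?_ hB₃
    rintro x (hx | ⟨hx₁, hx₂⟩)
    · exact hA₃ hx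
    · exact hcover₃ x (hA₁ hx₁) (hB₂ hx₂)

lemma DisplaysColl.weaklyCompatible (hC : C.IsTwoEdgeConnected) {Sig : Set (Sym2 (Set X))}
    (h : DisplaysColl C Sig) : WeaklyCompatible Sig := by
  intro S₁ hS₁ S₂ hS₂ S₃ hS₃ A₁ B₁ A₂ B₂ A₃ B₃ he₁ he₂ he₃
  subst he₁ he₂ he₃
  obtain ⟨I₁, hI₁, hA₁, hB₁⟩ := exists_isArc_of_displaysSplit hC (h _ hS₁)
  obtain ⟨I₂, hI₂, hA₂, hB₂⟩ := exists_isArc_of_displaysSplit hC (h _ hS₂)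
  obtain ⟨I₃, hI₃, hA₃, hB₃⟩ := exists_isArc_of_displaysSplit hC (h _ hS₃)
  by_contra! hne
  obtain ⟨hp, hq, hr, hx⟩ := hne
  exact (hx.mono (Set.inter_subset_inter (Set.inter_subset_inter hA₁ hB₂) hB₃)).ne_empty
    (hI₁.inter_compl_compl_eq_empty hC hI₂ hI₃
      (hp.mono (Set.inter_subset_inter (Set.inter_subset_inter hA₁ hA₂) hA₃))
      (hq.mono (Set.inter_subset_inter (Set.inter_subset_inter hB₁ hB₂) hA₃))
      (hr.mono (Set.inter_subset_inter (Set.inter_subset_inter hB₁ hA₂) hB₃)))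

lemma DisplaysColl.of_mStepNT (hC : C.IsTwoEdgeConnected) {Sig Sig' : Set (Sym2 (Set X))}
    (hd : DisplaysColl C Sig) (h : mStepNT Sig Sig') : DisplaysColl C Sig' := by
  obtain ⟨A₁, B₁, A₂, B₂, h₁, h₂, -, hm, -, rfl⟩ := h
  rintro S ⟨hS | hS, -⟩
  exacts [hd S hS, displaysColl_mOut hC (hd _ h₁) (hd _ h₂) hm S hS]

lemma DisplaysColl.of_yStepNT (hC : C.IsTwoEdgeConnected) {Sig Sig' : Set (Sym2 (Set X))}
    (hd : DisplaysColl C Sig) (h : yStepNT Sig Sig') : DisplaysColl C Sig' := by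
  obtain ⟨A₁, B₁, A₂, B₂, A₃, B₃, h₁, h₂, h₃, -, -, -, hy, -, rfl⟩ := h
  rintro S ⟨hS | hS, -⟩
  exacts [hd S hS, displaysColl_yOut hC (hd _ h₁) (hd _ h₂) (hd _ h₃) hy S hS]

end Finite

end Display

theorem statement15_general {X : Type*} [Fintype X] (Sig : Set (Sym2 (Set X))) (C : SimpleGraph X)
    (hC : IsXCycle C)
    (clMY clY clM : Option (Set (Sym2 (Set X))))
    (hMY : IsMYClosure Sig clMY) (hY : IsYClosure Sig clY) (hM : IsMClosure Sig clM) :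
    (DisplaysColl C Sig ↔ OptionDisplays C clMY) ∧
    (DisplaysColl C Sig → OptionDisplays C clY ∧ OptionDisplays C clM) := by
  classical
  obtain ⟨hconn, -, hdeg⟩ := hC
  have h2ec : C.IsTwoEdgeConnected := isTwoEdgeConnected_of_even_degree hconn fun v => by
    rw [← card_neighborSet_eq_degree, ← Nat.card_eq_fintype_card, Nat.card_coe_set_eq, hdeg v]
    exact even_two
  have hwc : ∀ T, DisplaysColl C T → WeaklyCompatible T := fun _ h => h.weaklyCompatible h2ec
  have hstepM : ∀ T T', DisplaysColl C T → mStepNT T T' → DisplaysColl C T' :=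
    fun _ _ h => h.of_mStepNT h2ec
  have hstepY : ∀ T T', DisplaysColl C T → yStepNT T T' → DisplaysColl C T' :=
    fun _ _ h => h.of_yStepNT h2ec
  have hstepMY : ∀ T T', DisplaysColl C T → mStepNT T T' ∨ yStepNT T T' → DisplaysColl C T' :=
    fun T T' h => Or.rec (hstepM T T' h) (hstepY T T' h)
  exact ⟨⟨hMY.optionDisplays hstepMY hwc, hMY.displaysColl_of_optionDisplays⟩,
    fun hd => ⟨hY.optionDisplays hstepY hwc hd, hM.optionDisplays hstepM (fun _ _ => trivial) hd⟩⟩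

/-- for `Σ ∈ P(X)` and an `X`-cycle `C`, `Σ` is displayed by `C` iff the
split closure `⟨Σ⟩_{M/Y}` is displayed by `C`; in that case the split closures `⟨Σ⟩_Y`
and `⟨Σ⟩_M` are also displayed by `C`. -/
theorem statement15 {X : Type*} [Fintype X] (Sig : Set (Sym2 (Set X))) (C : SimpleGraph X)
    (hPX : InPX Sig) (hC : IsXCycle C)
    (clMY clY clM : Option (Set (Sym2 (Set X))))
    (hMY : IsMYClosure Sig clMY) (hY : IsYClosure Sig clY) (hM : IsMClosure Sig clM) :
    (DisplaysColl C Sig ↔ OptionDisplays C clMY) ∧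
    (DisplaysColl C Sig → OptionDisplays C clY ∧ OptionDisplays C clM) :=
  statement15_general Sig C hC clMY clY clM hMY hY hM
end

section
/- Let P_ω(X) = P(X) ∪ {ω}, where Σ ⪯ ω for every Σ ∈ P(X), ω ⪯ ω, and ⟨ω⟩_θ = ω. Then for θ ∈ {θ_Y, θ_M, θ_{M/Y}} and all Σ, Σ' ∈ P_ω(X): (1) Σ ⪯ ⟨Σ⟩_θ; (2) if Σ ⪯ Σ' then ⟨Σ⟩_θ ⪯ ⟨Σ'⟩_θ; and (3) ⟨⟨Σ⟩_θ⟩_θ = ⟨Σ⟩_θ. That is, the split closure with respect to θ satisfies the usual properties of a closure operation. -/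
/-!
Common definitions: partial splits of a finite set `X`, modelled as unordered
pairs (`Sym2`) of nonempty disjoint subsets of `X`; the `M`-, `Y`- and `Z`-
closure rules; weak compatibility; `X`-cycles and display; split closure
sequences and split closures.
-/

variable {X : Type*}

/-! ### Auxiliary lemmas -/

section Aux

variable {X : Type*}

lemma splitExtends_refl (S : Sym2 (Set X)) : SplitExtends S S := by
  induction S using Sym2.ind with
  | _ A B => exact ⟨A, B, A, B, rfl, rfl, subset_rfl, subset_rfl⟩

lemma splitExtends_mk {T : Sym2 (Set X)} {A' B' A B : Set X} (h : T = s(A', B'))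
    (h1 : A ⊆ A') (h2 : B ⊆ B') : SplitExtends T s(A, B) :=
  ⟨A', B', A, B, h, rfl, h1, h2⟩

lemma splitExtends_align {T : Sym2 (Set X)} {A B : Set X} (h : SplitExtends T s(A, B)) :
    ∃ A' B', T = s(A', B') ∧ A ⊆ A' ∧ B ⊆ B' := by
  obtain ⟨A', B', C, D, hT, hS, hC, hD⟩ := h
  rcases Sym2.eq_iff.mp hS with ⟨rfl, rfl⟩ | ⟨rfl, rfl⟩
  · exact ⟨A', B', hT, hC, hD⟩
  · exact ⟨B', A', hT.trans (Sym2.eq_swap), hD, hC⟩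

lemma splitExtends_trans {S T U : Sym2 (Set X)} (h1 : SplitExtends T S)
    (h2 : SplitExtends U T) : SplitExtends U S := by
  induction S using Sym2.ind with
  | _ A B =>
    obtain ⟨A', B', hT, hA, hB⟩ := splitExtends_align h1
    subst hT
    obtain ⟨A'', B'', hU, hA', hB'⟩ := splitExtends_align h2
    exact splitExtends_mk hU (hA.trans hA') (hB.trans hB')

lemma splitExtends_antisymm {S T : Sym2 (Set X)} (h1 : SplitExtends T S)
    (h2 : SplitExtends S T) : S = T := by
  induction S using Sym2.ind with
  | _ A B =>
    obtain ⟨A', B', hT, hA, hB⟩ := splitExtends_align h1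
    subst hT
    obtain ⟨A'', B'', hS, hA', hB'⟩ := splitExtends_align h2
    rcases Sym2.eq_iff.mp hS with ⟨rfl, rfl⟩ | ⟨rfl, rfl⟩
    · rw [Set.Subset.antisymm hA hA', Set.Subset.antisymm hB hB']
    · -- here hA' : A' ⊆ B, hB' : B' ⊆ A, so A ⊆ A' ⊆ B ⊆ B' ⊆ A
      have e1 : A = A' := Set.Subset.antisymm hA (hA'.trans (hB.trans hB'))
      have e2 : B = B' := Set.Subset.antisymm hB (hB'.trans (hA.trans hA'))
      rw [← e1, ← e2]

lemma preceq_refl (Sig : Set (Sym2 (Set X))) : Preceq Sig Sig :=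
  fun S hS => ⟨S, hS, splitExtends_refl S⟩

lemma preceq_trans {A B C : Set (Sym2 (Set X))} (h1 : Preceq A B) (h2 : Preceq B C) :
    Preceq A C := by
  intro S hS
  obtain ⟨T, hT, e1⟩ := h1 S hS
  obtain ⟨U, hU, e2⟩ := h2 T hT
  exact ⟨U, hU, splitExtends_trans e1 e2⟩

lemma exists_sreduce_extends [Finite X] (Sig : Set (Sym2 (Set X))) :
    ∀ S ∈ Sig, ∃ T ∈ sreduce Sig, SplitExtends T S := by
  have key : ∀ n (S : Sym2 (Set X)), S ∈ Sig → ({U ∈ Sig | SplitExtends U S}).ncard ≤ n →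
      ∃ T ∈ sreduce Sig, SplitExtends T S := by
    intro n
    induction n with
    | zero =>
      intro S hS hc
      exfalso
      have : ({U ∈ Sig | SplitExtends U S}).ncard = 0 := Nat.le_zero.mp hc
      rw [Set.ncard_eq_zero (Set.toFinite _)] at this
      exact absurd this (Set.nonempty_iff_ne_empty.mp ⟨S, hS, splitExtends_refl S⟩)
    | succ n ih =>
      intro S hS hc
      by_cases h : S ∈ sreduce Sig
      · exact ⟨S, h, splitExtends_refl S⟩
      · have hT : ∃ T ∈ Sig, T ≠ S ∧ SplitExtends T S := by
          by_contra hno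
          exact h ⟨hS, hno⟩
        obtain ⟨T, hT, hne, hext⟩ := hT
        have hsub : {U ∈ Sig | SplitExtends U T} ⊂ {U ∈ Sig | SplitExtends U S} := by
          constructor
          · rintro U ⟨hU, hUT⟩
            exact ⟨hU, splitExtends_trans hext hUT⟩
          · intro hcontra
            have hSmem : S ∈ {U ∈ Sig | SplitExtends U S} := ⟨hS, splitExtends_refl S⟩
            have := hcontra hSmem
            exact hne (splitExtends_antisymm this.2 hext)
        have hlt := Set.ncard_lt_ncard hsub (Set.toFinite _)
        obtain ⟨T', hT', he'⟩ := ih T hT (by omega)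
        exact ⟨T', hT', splitExtends_trans hext he'⟩
  intro S hS
  exact key _ S hS le_rfl

lemma wc_mono {Sig Del : Set (Sym2 (Set X))} (h : Preceq Sig Del)
    (hD : WeaklyCompatible Del) : WeaklyCompatible Sig := by
  intro S1 h1 S2 h2 S3 h3
  obtain ⟨T1, hT1, e1⟩ := h S1 h1
  obtain ⟨T2, hT2, e2⟩ := h S2 h2
  obtain ⟨T3, hT3, e3⟩ := h S3 h3
  intro A1 B1 A2 B2 A3 B3 r1 r2 r3
  subst r1; subst r2; subst r3
  obtain ⟨A1', B1', rT1, hA1, hB1⟩ := splitExtends_align e1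
  obtain ⟨A2', B2', rT2, hA2, hB2⟩ := splitExtends_align e2
  obtain ⟨A3', B3', rT3, hA3, hB3⟩ := splitExtends_align e3
  rcases hD T1 hT1 T2 hT2 T3 hT3 A1' B1' A2' B2' A3' B3' rT1 rT2 rT3 with hh | hh | hh | hh
  · left
    rw [← Set.subset_empty_iff, ← hh]
    exact Set.inter_subset_inter (Set.inter_subset_inter hA1 hA2) hA3
  · right; left
    rw [← Set.subset_empty_iff, ← hh]
    exact Set.inter_subset_inter (Set.inter_subset_inter hB1 hB2) hA3
  · right; right; left
    rw [← Set.subset_empty_iff, ← hh]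
    exact Set.inter_subset_inter (Set.inter_subset_inter hB1 hA2) hB3
  · right; right; right
    rw [← Set.subset_empty_iff, ← hh]
    exact Set.inter_subset_inter (Set.inter_subset_inter hA1 hB2) hB3

lemma partialSplit_inter_empty {A B : Set X} (h : IsPartialSplit s(A, B)) : A ∩ B = ∅ := by
  obtain ⟨C, D, hS, _, _, hd⟩ := h
  rcases Sym2.eq_iff.mp hS with ⟨rfl, rfl⟩ | ⟨rfl, rfl⟩
  · exact Set.disjoint_iff_inter_eq_empty.mp hd
  · exact Set.disjoint_iff_inter_eq_empty.mp hd.symm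

lemma mOut_preceq [Finite X] {Sig Del : Set (Sym2 (Set X))}
    (hpre : Preceq Sig Del) (hPX : ∀ S ∈ Del, IsPartialSplit S) (hcl : mClosed Del)
    {A1 B1 A2 B2 : Set X} (h1 : s(A1, B1) ∈ Sig) (h2 : s(A2, B2) ∈ Sig)
    (hne : s(A1, B1) ≠ s(A2, B2)) (hc : mCond A1 B1 A2 B2) :
    Preceq (mOut A1 B1 A2 B2) Del := by
  obtain ⟨T1, hT1, e1⟩ := hpre _ h1
  obtain ⟨T2, hT2, e2⟩ := hpre _ h2
  obtain ⟨A1', B1', r1, a1, b1⟩ := splitExtends_align e1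
  obtain ⟨A2', B2', r2, a2, b2⟩ := splitExtends_align e2
  by_cases heq : s(A1', B1') = (s(A2', B2') : Sym2 (Set X))
  · -- common extender: T1 extends all four outputs
    have hT1' : s(A1', B1') ∈ Del := r1 ▸ hT1
    have hd : A1' ∩ B1' = ∅ := partialSplit_inter_empty (hPX _ hT1')
    rcases Sym2.eq_iff.mp heq with ⟨hA, hB⟩ | ⟨hA, hB⟩
    · -- A1' = A2', B1' = B2'
      intro S hS
      refine ⟨s(A1', B1'), hT1', ?_⟩
      have a2' : A2 ⊆ A1' := by rw [hA]; exact a2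
      have b2' : B2 ⊆ B1' := by rw [hB]; exact b2
      simp only [mOut, Set.mem_insert_iff, Set.mem_singleton_iff] at hS
      rcases hS with rfl | rfl | rfl | rfl
      · exact splitExtends_mk rfl a1 b1
      · exact splitExtends_mk rfl a2' b2'
      · exact splitExtends_mk rfl (Set.inter_subset_left.trans a1) (Set.union_subset b1 b2')
      · exact splitExtends_mk (Sym2.eq_swap) (Set.inter_subset_left.trans b1)
          (Set.union_subset a1 a2')
    · -- A1' = B2', B1' = A2' : contradicts mCond via disjointness
      exfalso
      have a2' : A2 ⊆ B1' := by rw [hB]; exact a2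
      have hsub : A1 ∩ A2 ⊆ A1' ∩ B1' := Set.inter_subset_inter a1 a2'
      exact absurd hd (Set.nonempty_iff_ne_empty.mp (hc.1.mono hsub))
  · have hc' : mCond A1' B1' A2' B2' :=
      ⟨hc.1.mono (Set.inter_subset_inter a1 a2), hc.2.mono (Set.inter_subset_inter b1 b2)⟩
    have hcl' := hcl A1' B1' A2' B2' (r1 ▸ hT1) (r2 ▸ hT2) heq hc'
    have hM : Preceq (mOut A1' B1' A2' B2') Del := by
      intro S hS
      obtain ⟨T, hT, e⟩ := exists_sreduce_extends _ S hS
      obtain ⟨U, hU, e'⟩ := hcl' T hT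
      exact ⟨U, hU, splitExtends_trans e e'⟩
    have hpre2 : Preceq (mOut A1 B1 A2 B2) (mOut A1' B1' A2' B2') := by
      intro S hS
      simp only [mOut, Set.mem_insert_iff, Set.mem_singleton_iff] at hS
      rcases hS with rfl | rfl | rfl | rfl
      · exact ⟨s(A1', B1'), by simp [mOut], splitExtends_mk rfl a1 b1⟩
      · exact ⟨s(A2', B2'), by simp [mOut], splitExtends_mk rfl a2 b2⟩
      · exact ⟨s(A1' ∩ A2', B1' ∪ B2'), by simp [mOut],
          splitExtends_mk rfl (Set.inter_subset_inter a1 a2) (Set.union_subset_union b1 b2)⟩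
      · exact ⟨s(B1' ∩ B2', A1' ∪ A2'), by simp [mOut],
          splitExtends_mk rfl (Set.inter_subset_inter b1 b2) (Set.union_subset_union a1 a2)⟩
    exact preceq_trans hpre2 hM

lemma yOut_preceq [Finite X] {Sig Del : Set (Sym2 (Set X))}
    (hpre : Preceq Sig Del) (hPX : ∀ S ∈ Del, IsPartialSplit S)
    (hwc : WeaklyCompatible Del) (hcl : yClosed Del)
    {A1 B1 A2 B2 A3 B3 : Set X}
    (h1 : s(A1, B1) ∈ Sig) (h2 : s(A2, B2) ∈ Sig) (h3 : s(A3, B3) ∈ Sig)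
    (hc : yCond A1 B1 A2 B2 A3 B3) :
    Preceq (yOut A1 B1 A2 B2 A3 B3) Del := by
  obtain ⟨T1, hT1, e1⟩ := hpre _ h1
  obtain ⟨T2, hT2, e2⟩ := hpre _ h2
  obtain ⟨T3, hT3, e3⟩ := hpre _ h3
  obtain ⟨A1', B1', r1, a1, b1⟩ := splitExtends_align e1
  obtain ⟨A2', B2', r2, a2, b2⟩ := splitExtends_align e2
  obtain ⟨A3', B3', r3, a3, b3⟩ := splitExtends_align e3
  obtain ⟨hc1, hc2, hc3, hc4⟩ := hc
  have hT1' : s(A1', B1') ∈ Del := r1 ▸ hT1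
  have hT2' : s(A2', B2') ∈ Del := r2 ▸ hT2
  have hT3' : s(A3', B3') ∈ Del := r3 ▸ hT3
  have hd1 : A1' ∩ B1' = ∅ := partialSplit_inter_empty (hPX _ hT1')
  have hd2 : A2' ∩ B2' = ∅ := partialSplit_inter_empty (hPX _ hT2')
  have hd3 : A3' ∩ B3' = ∅ := partialSplit_inter_empty (hPX _ hT3')
  -- the three extenders are pairwise distinct
  have hne12 : s(A1', B1') ≠ (s(A2', B2') : Sym2 (Set X)) := by
    intro heq
    rcases Sym2.eq_iff.mp heq with ⟨hA, hB⟩ | ⟨hA, hB⟩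
    · -- A1' = A2', B1' = B2' : B1 ∩ A2 ⊆ B1' ∩ A1' = ∅
      have : B1 ∩ A2 ∩ B3 ⊆ A1' ∩ B1' := by
        intro x ⟨⟨hx1, hx2⟩, _⟩
        exact ⟨hA ▸ a2 hx2, b1 hx1⟩
      exact absurd hd1 (Set.nonempty_iff_ne_empty.mp (hc3.mono this))
    · -- A1' = B2', B1' = A2' : A1 ∩ A2 ⊆ A1' ∩ B1'
      have : A1 ∩ A2 ∩ A3 ⊆ A1' ∩ B1' := by
        intro x ⟨⟨hx1, hx2⟩, _⟩
        exact ⟨a1 hx1, hB ▸ a2 hx2⟩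
      exact absurd hd1 (Set.nonempty_iff_ne_empty.mp (hc1.mono this))
  have hne13 : s(A1', B1') ≠ (s(A3', B3') : Sym2 (Set X)) := by
    intro heq
    rcases Sym2.eq_iff.mp heq with ⟨hA, hB⟩ | ⟨hA, hB⟩
    · -- A1' = A3', B1' = B3' : B1 ∩ A3 ⊆ B1' ∩ A1'
      have : B1 ∩ B2 ∩ A3 ⊆ A1' ∩ B1' := by
        intro x ⟨⟨hx1, _⟩, hx3⟩
        exact ⟨hA ▸ a3 hx3, b1 hx1⟩
      exact absurd hd1 (Set.nonempty_iff_ne_empty.mp (hc2.mono this))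
    · -- A1' = B3', B1' = A3' : A1 ∩ A3 ⊆ A1' ∩ B1'
      have : A1 ∩ A2 ∩ A3 ⊆ A1' ∩ B1' := by
        intro x ⟨⟨hx1, _⟩, hx3⟩
        exact ⟨a1 hx1, hB ▸ a3 hx3⟩
      exact absurd hd1 (Set.nonempty_iff_ne_empty.mp (hc1.mono this))
  have hne23 : s(A2', B2') ≠ (s(A3', B3') : Sym2 (Set X)) := by
    intro heq
    rcases Sym2.eq_iff.mp heq with ⟨hA, hB⟩ | ⟨hA, hB⟩
    · -- A2' = A3', B2' = B3' : B2 ∩ A3 ⊆ B2' ∩ A2'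
      have : B1 ∩ B2 ∩ A3 ⊆ A2' ∩ B2' := by
        intro x ⟨⟨_, hx2⟩, hx3⟩
        exact ⟨hA ▸ a3 hx3, b2 hx2⟩
      exact absurd hd2 (Set.nonempty_iff_ne_empty.mp (hc2.mono this))
    · -- A2' = B3', B2' = A3' : A2 ∩ A3 ⊆ A2' ∩ B2'
      have : A1 ∩ A2 ∩ A3 ⊆ A2' ∩ B2' := by
        intro x ⟨⟨_, hx2⟩, hx3⟩
        exact ⟨a2 hx2, hB ▸ a3 hx3⟩
      exact absurd hd2 (Set.nonempty_iff_ne_empty.mp (hc1.mono this))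
  -- yCond lifts using weak compatibility of Del
  have hsub1 : A1 ∩ A2 ∩ A3 ⊆ A1' ∩ A2' ∩ A3' :=
    Set.inter_subset_inter (Set.inter_subset_inter a1 a2) a3
  have hsub2 : B1 ∩ B2 ∩ A3 ⊆ B1' ∩ B2' ∩ A3' :=
    Set.inter_subset_inter (Set.inter_subset_inter b1 b2) a3
  have hsub3 : B1 ∩ A2 ∩ B3 ⊆ B1' ∩ A2' ∩ B3' :=
    Set.inter_subset_inter (Set.inter_subset_inter b1 a2) b3
  have hc4' : A1' ∩ B2' ∩ B3' = ∅ := by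
    rcases hwc _ hT1' _ hT2' _ hT3' A1' B1' A2' B2' A3' B3' rfl rfl rfl with hh | hh | hh | hh
    · exact absurd hh (Set.nonempty_iff_ne_empty.mp (hc1.mono hsub1))
    · exact absurd hh (Set.nonempty_iff_ne_empty.mp (hc2.mono hsub2))
    · exact absurd hh (Set.nonempty_iff_ne_empty.mp (hc3.mono hsub3))
    · exact hh
  have hc' : yCond A1' B1' A2' B2' A3' B3' :=
    ⟨hc1.mono hsub1, hc2.mono hsub2, hc3.mono hsub3, hc4'⟩
  have hcl' := hcl A1' B1' A2' B2' A3' B3' hT1' hT2' hT3' hne12 hne13 hne23 hc'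
  have hY : Preceq (yOut A1' B1' A2' B2' A3' B3') Del := by
    intro S hS
    obtain ⟨T, hT, e⟩ := exists_sreduce_extends _ S hS
    obtain ⟨U, hU, e'⟩ := hcl' T hT
    exact ⟨U, hU, splitExtends_trans e e'⟩
  have hpre2 : Preceq (yOut A1 B1 A2 B2 A3 B3) (yOut A1' B1' A2' B2' A3' B3') := by
    intro S hS
    simp only [yOut, Set.mem_insert_iff, Set.mem_singleton_iff] at hS
    rcases hS with rfl | rfl | rfl
    · exact ⟨s(B1' ∪ (B2' ∩ B3'), A1'), by simp [yOut],
        splitExtends_mk rfl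
          (Set.union_subset_union b1 (Set.inter_subset_inter b2 b3)) a1⟩
    · exact ⟨s(A2' ∪ (A1' ∩ B3'), B2'), by simp [yOut],
        splitExtends_mk rfl
          (Set.union_subset_union a2 (Set.inter_subset_inter a1 b3)) b2⟩
    · exact ⟨s(A3' ∪ (A1' ∩ B2'), B3'), by simp [yOut],
        splitExtends_mk rfl
          (Set.union_subset_union a3 (Set.inter_subset_inter a1 b2)) b3⟩
  exact preceq_trans hpre2 hY

/-! Step lemmas: a single (non-trivial) application of a rule preserves `⪯ Del`
whenever `Del` is suitable and closed. -/

lemma mStepNT_preceq [Finite X] {Sig Sig' Del : Set (Sym2 (Set X))}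
    (hPX : ∀ S ∈ Del, IsPartialSplit S) (hcl : mClosed Del)
    (hpre : Preceq Sig Del) (hS : mStepNT Sig Sig') : Preceq Sig' Del := by
  obtain ⟨A1, B1, A2, B2, h1, h2, hne, hc, _, rfl⟩ := hS
  have hout := mOut_preceq hpre hPX hcl h1 h2 hne hc
  intro S hS
  rcases hS.1 with h | h
  · exact hpre S h
  · exact hout S h

lemma yStepNT_preceq [Finite X] {Sig Sig' Del : Set (Sym2 (Set X))}
    (hPX : ∀ S ∈ Del, IsPartialSplit S) (hwc : WeaklyCompatible Del) (hcl : yClosed Del)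
    (hpre : Preceq Sig Del) (hS : yStepNT Sig Sig') : Preceq Sig' Del := by
  obtain ⟨A1, B1, A2, B2, A3, B3, h1, h2, h3, _, _, _, hc, _, rfl⟩ := hS
  have hout := yOut_preceq hpre hPX hwc hcl h1 h2 h3 hc
  intro S hS
  rcases hS.1 with h | h
  · exact hpre S h
  · exact hout S h

/-! Generic lemmas about split closures. -/

lemma preceq_seq {f : ℕ → Set (Sym2 (Set X))} {n : ℕ}
    (h : ∀ i < n, Preceq (f i) (f (i + 1))) : Preceq (f 0) (f n) := by
  induction n with
  | zero => exact preceq_refl _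
  | succ n ih =>
    exact preceq_trans (ih (fun i hi => h i (by omega))) (h n (by omega))

lemma splitClosure_extensive {P : Set (Sym2 (Set X)) → Prop}
    {stepNT : Set (Sym2 (Set X)) → Set (Sym2 (Set X)) → Prop}
    {closed : Set (Sym2 (Set X)) → Prop} {Sig : Set (Sym2 (Set X))}
    {cl : Option (Set (Sym2 (Set X)))}
    (h : IsSplitClosure P stepNT closed Sig cl) :
    cl = none ∨ ∃ T, cl = some T ∧ Preceq Sig T := by
  obtain ⟨n, f, hseq, hend⟩ := h
  rcases hend with ⟨_, _, rfl⟩ | ⟨_, rfl⟩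
  · right
    refine ⟨f n, rfl, ?_⟩
    rw [← hseq.1]
    exact preceq_seq (fun i hi => (hseq.2.2 i hi).2.2.1)
  · left; rfl

lemma splitClosure_mono {P : Set (Sym2 (Set X)) → Prop}
    {stepNT : Set (Sym2 (Set X)) → Set (Sym2 (Set X)) → Prop}
    {closed : Set (Sym2 (Set X)) → Prop} {Sig Sig' : Set (Sym2 (Set X))}
    {cl cl' : Option (Set (Sym2 (Set X)))}
    (hstep : ∀ Del, (∀ S ∈ Del, IsPartialSplit S) → P Del → closed Del →
      ∀ S S', Preceq S Del → stepNT S S' → Preceq S' Del)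
    (hPdown : ∀ S Del, Preceq S Del → P Del → P S)
    (h : IsSplitClosure P stepNT closed Sig cl)
    (h' : IsSplitClosure P stepNT closed Sig' cl')
    (hpre : Preceq Sig Sig') :
    cl' = none ∨ ∃ T T', cl = some T ∧ cl' = some T' ∧ Preceq T T' := by
  obtain ⟨n', f', hseq', hend'⟩ := h'
  rcases hend' with ⟨hP', hcl', rfl⟩ | ⟨_, rfl⟩
  · right
    have hDelPX : ∀ S ∈ f' n', IsPartialSplit S := (hseq'.2.1 n' le_rfl).1
    have hSig'Del : Preceq Sig' (f' n') := by
      rw [← hseq'.1]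
      exact preceq_seq (fun i hi => (hseq'.2.2 i hi).2.2.1)
    have hSigDel : Preceq Sig (f' n') := preceq_trans hpre hSig'Del
    obtain ⟨n, f, hseq, hend⟩ := h
    have key : ∀ i, i ≤ n → Preceq (f i) (f' n') := by
      intro i
      induction i with
      | zero => intro _; rw [hseq.1]; exact hSigDel
      | succ i ih =>
        intro hle
        have hi := hseq.2.2 i (by omega)
        exact hstep (f' n') hDelPX hP' hcl' (f i) (f (i + 1)) (ih (by omega)) hi.2.1
    rcases hend with ⟨_, _, rfl⟩ | ⟨hnP, rfl⟩
    · exact ⟨f n, f' n', rfl, rfl, key n le_rfl⟩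
    · exact absurd (hPdown _ _ (key n le_rfl) hP') hnP
  · left; rfl

lemma splitClosure_idem {P : Set (Sym2 (Set X)) → Prop}
    {stepNT : Set (Sym2 (Set X)) → Set (Sym2 (Set X)) → Prop}
    {closed : Set (Sym2 (Set X)) → Prop} {T : Set (Sym2 (Set X))}
    {cl : Option (Set (Sym2 (Set X)))}
    (hnostep : ∀ S S', closed S → ¬ stepNT S S')
    (hPT : P T) (hclT : closed T)
    (h : IsSplitClosure P stepNT closed T cl) : cl = some T := by
  obtain ⟨m, g, hseq, hend⟩ := h
  have hm : m = 0 := by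
    by_contra hm
    have h0 := hseq.2.2 0 (Nat.pos_of_ne_zero hm)
    exact hnostep _ _ (hseq.1 ▸ hclT) h0.2.1
  subst hm
  rcases hend with ⟨_, _, rfl⟩ | ⟨hnP, _⟩
  · rw [hseq.1]
  · exact absurd (hseq.1 ▸ hPT) hnP

lemma mClosed_nostep {Sig Sig' : Set (Sym2 (Set X))} (hcl : mClosed Sig) :
    ¬ mStepNT Sig Sig' := by
  rintro ⟨A1, B1, A2, B2, h1, h2, hne, hc, hnt, _⟩
  exact hnt (hcl A1 B1 A2 B2 h1 h2 hne hc)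

lemma yClosed_nostep {Sig Sig' : Set (Sym2 (Set X))} (hcl : yClosed Sig) :
    ¬ yStepNT Sig Sig' := by
  rintro ⟨A1, B1, A2, B2, A3, B3, h1, h2, h3, n12, n13, n23, hc, hnt, _⟩
  exact hnt (hcl A1 B1 A2 B2 A3 B3 h1 h2 h3 n12 n13 n23 hc)

/-- The generic packaging of the three closure properties. -/
lemma closO_props {X : Type*} [Finite X]
    {P : Set (Sym2 (Set X)) → Prop}
    {stepNT : Set (Sym2 (Set X)) → Set (Sym2 (Set X)) → Prop}
    {closed : Set (Sym2 (Set X)) → Prop}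
    (hstep : ∀ Del, (∀ S ∈ Del, IsPartialSplit S) → P Del → closed Del →
      ∀ S S', Preceq S Del → stepNT S S' → Preceq S' Del)
    (hPdown : ∀ S Del, Preceq S Del → P Del → P S)
    (hnostep : ∀ S S', closed S → ¬ stepNT S S')
    (cls : Set (Sym2 (Set X)) → Option (Set (Sym2 (Set X))) → Prop)
    (hc : cls = IsSplitClosure P stepNT closed) :
    (∀ x y : Option (Set (Sym2 (Set X))), InPOmega x → ClosO cls x y → PreceqO x y) ∧
    (∀ x x' y y' : Option (Set (Sym2 (Set X))), InPOmega x → InPOmega x' →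
      ClosO cls x y → ClosO cls x' y' → PreceqO x x' → PreceqO y y') ∧
    (∀ x y z : Option (Set (Sym2 (Set X))), InPOmega x →
      ClosO cls x y → ClosO cls y z → z = y) := by
  subst hc
  refine ⟨?_, ?_, ?_⟩
  · -- extensivity
    rintro x y _ (⟨rfl, rfl⟩ | ⟨Sig, rfl, hSig⟩)
    · exact Or.inl rfl
    · rcases splitClosure_extensive hSig with rfl | ⟨T, rfl, hT⟩
      · exact Or.inl rfl
      · exact Or.inr ⟨Sig, T, rfl, rfl, hT⟩
  · -- monotonicity
    rintro x x' y y' _ _ hxy hx'y' hxx'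
    rcases hx'y' with ⟨rfl, rfl⟩ | ⟨Sig', rfl, hSig'⟩
    · exact Or.inl rfl
    · rcases hxy with ⟨rfl, rfl⟩ | ⟨Sig, rfl, hSig⟩
      · rcases hxx' with h | ⟨S0, S0', hS0, _, _⟩
        · rcases splitClosure_extensive hSig' with rfl | _
          · exact Or.inl rfl
          · exact absurd h (by simp)
        · exact absurd hS0 (by simp)
      · have hpre : Preceq Sig Sig' := by
          rcases hxx' with h | ⟨S0, S0', hS0, hS0', hp⟩
          · exact absurd h (by simp)
          · obtain rfl : Sig = S0 := by injection hS0
            obtain rfl : Sig' = S0' := by injection hS0'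
            exact hp
        rcases splitClosure_mono hstep hPdown hSig hSig' hpre with rfl | ⟨T, T', rfl, rfl, hTT'⟩
        · exact Or.inl rfl
        · exact Or.inr ⟨T, T', rfl, rfl, hTT'⟩
  · -- idempotence
    rintro x y z _ hxy hyz
    rcases hxy with ⟨rfl, rfl⟩ | ⟨Sig, rfl, hSig⟩
    · rcases hyz with ⟨_, rfl⟩ | ⟨S0, hS0, _⟩
      · rfl
      · exact absurd hS0 (by simp)
    · obtain ⟨n, f, hseq, hend⟩ := hSig
      rcases hend with ⟨hP, hcl, rfl⟩ | ⟨_, rfl⟩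
      · rcases hyz with ⟨h, _⟩ | ⟨S0, hS0, hclS0⟩
        · exact absurd h (by simp)
        · obtain rfl : f n = S0 := by injection hS0
          exact splitClosure_idem hnostep hP hcl hclS0
      · rcases hyz with ⟨_, rfl⟩ | ⟨S0, hS0, _⟩
        · rfl
        · exact absurd hS0 (by simp)

end Aux

/-- for `θ` any of the `Y`-, `M`- or `M/Y`-rules, the split closure on
`P_ω(X)` satisfies the usual closure-operation properties: extensivity, monotonicity
and idempotence. -/
theorem statement16 {X : Type*} [Fintype X]
    (cls : Set (Sym2 (Set X)) → Option (Set (Sym2 (Set X))) → Prop)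
    (hcls : cls = IsYClosure ∨ cls = IsMClosure ∨ cls = IsMYClosure) :
    (∀ x y : Option (Set (Sym2 (Set X))), InPOmega x → ClosO cls x y → PreceqO x y) ∧
    (∀ x x' y y' : Option (Set (Sym2 (Set X))), InPOmega x → InPOmega x' →
      ClosO cls x y → ClosO cls x' y' → PreceqO x x' → PreceqO y y') ∧
    (∀ x y z : Option (Set (Sym2 (Set X))), InPOmega x →
      ClosO cls x y → ClosO cls y z → z = y) := by
  rcases hcls with rfl | rfl | rfl
  · exact closO_props
      (fun Del hPX hP hcl S S' hpre hstep => yStepNT_preceq hPX hP hcl hpre hstep)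
      (fun S Del hpre hP => wc_mono hpre hP)
      (fun S S' hcl => yClosed_nostep hcl)
      _ rfl
  · exact closO_props
      (fun Del hPX _ hcl S S' hpre hstep => mStepNT_preceq hPX hcl hpre hstep)
      (fun _ _ _ _ => trivial)
      (fun S S' hcl => mClosed_nostep hcl)
      _ rfl
  · exact closO_props (P := WeaklyCompatible)
      (stepNT := fun s s' => mStepNT s s' ∨ yStepNT s s')
      (closed := fun s => mClosed s ∧ yClosed s)
      (fun Del hPX hP hcl S S' hpre hstep =>
        hstep.elim (mStepNT_preceq hPX hcl.1 hpre) (yStepNT_preceq hPX hP hcl.2 hpre))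
      (fun S Del hpre hP => wc_mono hpre hP)
      (fun S S' hcl hstep => hstep.elim (mClosed_nostep hcl.1) (yClosed_nostep hcl.2))
      _ rfl
end

section
/- Suppose Σ ∈ P(X) is a weakly compatible irreducible collection of partial splits of X. Then the length n of any split closure sequence for Σ with respect to the Y-rule θ_Y is bounded above by |Σ|·|X| − Σ_{A|B ∈ Σ} |A ∪ B|. -/
/-!
Common definitions: partial splits of a finite set `X`, modelled as unordered
pairs (`Sym2`) of nonempty disjoint subsets of `X`; the `M`-, `Y`- and `Z`-
closure rules; weak compatibility; `X`-cycles and display; split closure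
sequences and split closures.
-/

variable {X : Type*}

section Statement17Aux

variable {X : Type*}

lemma splitExtends_pair_iff {A B C D : Set X} :
    SplitExtends s(A, B) s(C, D) ↔ (C ⊆ A ∧ D ⊆ B) ∨ (C ⊆ B ∧ D ⊆ A) := by
  constructor
  · rintro ⟨A', B', C', D', h1, h2, h3, h4⟩
    rw [Sym2.eq_iff] at h1 h2
    rcases h1 with ⟨rfl, rfl⟩ | ⟨rfl, rfl⟩ <;> rcases h2 with ⟨rfl, rfl⟩ | ⟨rfl, rfl⟩ <;> tauto
  · rintro (⟨h1, h2⟩ | ⟨h1, h2⟩)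
    · exact ⟨A, B, C, D, rfl, rfl, h1, h2⟩
    · exact ⟨B, A, C, D, Sym2.eq_swap.symm, rfl, h1, h2⟩

lemma splitGround_pair (A B : Set X) : splitGround s(A, B) = A ∪ B := by
  have h : {C : Set X | C ∈ s(A, B)} = {A, B} := by
    ext C; simp [Sym2.mem_iff]
  rw [splitGround, h, Set.sUnion_pair]

lemma splitGround_subset_of_extends {S T : Sym2 (Set X)} (h : SplitExtends S T) :
    splitGround T ⊆ splitGround S := by
  induction S using Sym2.ind with
  | _ A B =>
    induction T using Sym2.ind with
    | _ C D =>
      rw [splitExtends_pair_iff] at h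
      rw [splitGround_pair, splitGround_pair]
      rcases h with ⟨h1, h2⟩ | ⟨h1, h2⟩
      · exact Set.union_subset (h1.trans Set.subset_union_left) (h2.trans Set.subset_union_right)
      · exact Set.union_subset (h1.trans Set.subset_union_right) (h2.trans Set.subset_union_left)

lemma isPartialSplit_pair_elim {A B : Set X} (h : IsPartialSplit s(A, B)) :
    A.Nonempty ∧ B.Nonempty ∧ Disjoint A B := by
  obtain ⟨C, D, hE, hC, hD, hdis⟩ := h
  rw [Sym2.eq_iff] at hE
  rcases hE with ⟨rfl, rfl⟩ | ⟨rfl, rfl⟩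
  · exact ⟨hC, hD, hdis⟩
  · exact ⟨hD, hC, hdis.symm⟩

lemma eq_of_extends_ground_eq {S T : Sym2 (Set X)} (hS : IsPartialSplit S)
    (hext : SplitExtends S T) (hg : splitGround S = splitGround T) : S = T := by
  induction S using Sym2.ind with
  | _ C D =>
    induction T using Sym2.ind with
    | _ A B =>
      obtain ⟨-, -, hCD⟩ := isPartialSplit_pair_elim hS
      rw [splitExtends_pair_iff] at hext
      rw [splitGround_pair, splitGround_pair] at hg
      rcases hext with ⟨h1, h2⟩ | ⟨h1, h2⟩
      · have hCA : C ⊆ A := by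
          intro x hx
          have hx' : x ∈ A ∪ B := by rw [← hg]; exact Set.mem_union_left _ hx
          rcases hx' with h | h
          · exact h
          · exact absurd rfl (hCD.ne_of_mem hx (h2 h))
        have hDB : D ⊆ B := by
          intro x hx
          have hx' : x ∈ A ∪ B := by rw [← hg]; exact Set.mem_union_right _ hx
          rcases hx' with h | h
          · exact absurd rfl ((hCD.ne_of_mem (h1 h) hx).symm)
          · exact h
        rw [Set.Subset.antisymm hCA h1, Set.Subset.antisymm hDB h2]
      · have hCB : C ⊆ B := by
          intro x hx
          have hx' : x ∈ A ∪ B := by rw [← hg]; exact Set.mem_union_left _ hx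
          rcases hx' with h | h
          · exact absurd rfl (hCD.ne_of_mem hx (h1 h))
          · exact h
        have hDA : D ⊆ A := by
          intro x hx
          have hx' : x ∈ A ∪ B := by rw [← hg]; exact Set.mem_union_right _ hx
          rcases hx' with h | h
          · exact h
          · exact absurd rfl ((hCD.ne_of_mem (h2 h) hx).symm)
        rw [Set.Subset.antisymm hCB h2, Set.Subset.antisymm hDA h1]
        exact Sym2.eq_swap

variable [Fintype X]

/-- The deficiency `|X| - |ground S|` of a partial split. -/
noncomputable def sdefic (S : Sym2 (Set X)) : ℕ := Nat.card X - (splitGround S).ncard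

lemma splitGround_ncard_le (S : Sym2 (Set X)) : (splitGround S).ncard ≤ Nat.card X := by
  have h := Set.ncard_le_ncard (Set.subset_univ (splitGround S)) Set.finite_univ
  rwa [Set.ncard_univ] at h

lemma sdefic_le_of_extends {S T : Sym2 (Set X)} (h : SplitExtends S T) :
    sdefic S ≤ sdefic T := by
  have h1 := Set.ncard_le_ncard (splitGround_subset_of_extends h) (Set.toFinite _)
  unfold sdefic; omega

lemma sdefic_lt_of_extends_ne {S T : Sym2 (Set X)} (hS : IsPartialSplit S)
    (h : SplitExtends S T) (hne : S ≠ T) : sdefic S < sdefic T := by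
  have hsub := splitGround_subset_of_extends h
  have hne' : splitGround T ≠ splitGround S :=
    fun q => hne (eq_of_extends_ground_eq hS h q.symm)
  have h1 := Set.ncard_lt_ncard (ssubset_of_subset_of_ne hsub hne') (Set.toFinite _)
  have h2 := splitGround_ncard_le S
  unfold sdefic; omega

end Statement17Aux

section Statement17Step

variable {X : Type*} [Fintype X]

lemma ystep_sum_lt {Sig Sig' : Set (Sym2 (Set X))} (hPX : InPX Sig)
    (hstep : yStepNT Sig Sig') :
    (∑ᶠ S ∈ Sig', sdefic S) < ∑ᶠ S ∈ Sig, sdefic S := by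
  classical
  obtain ⟨A1, B1, A2, B2, A3, B3, hm1, hm2, hm3, hne12, hne13, hne23, hyc, hnt, hSig'⟩ := hstep
  obtain ⟨hA1, hB1, hd1⟩ := isPartialSplit_pair_elim (hPX.1 _ hm1)
  obtain ⟨hA2, hB2, hd2⟩ := isPartialSplit_pair_elim (hPX.1 _ hm2)
  obtain ⟨hA3, hB3, hd3⟩ := isPartialSplit_pair_elim (hPX.1 _ hm3)
  obtain ⟨hy1, hy2, hy3, hy4⟩ := hyc
  set S1 : Sym2 (Set X) := s(A1, B1) with hS1def
  set S2 : Sym2 (Set X) := s(A2, B2) with hS2def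
  set S3 : Sym2 (Set X) := s(A3, B3) with hS3def
  set S1' : Sym2 (Set X) := s(B1 ∪ (B2 ∩ B3), A1) with hS1'def
  set S2' : Sym2 (Set X) := s(A2 ∪ (A1 ∩ B3), B2) with hS2'def
  set S3' : Sym2 (Set X) := s(A3 ∪ (A1 ∩ B2), B3) with hS3'def
  -- membership characterization of yOut
  have hyout_mem : ∀ T : Sym2 (Set X),
      T ∈ yOut A1 B1 A2 B2 A3 B3 ↔ (T = S1' ∨ T = S2' ∨ T = S3') := by
    intro T
    rw [hS1'def, hS2'def, hS3'def]
    simp only [yOut, Set.mem_insert_iff, Set.mem_singleton_iff]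
  -- the new splits extend the old ones
  have hext1 : SplitExtends S1' S1 := by
    rw [hS1def, hS1'def]
    exact splitExtends_pair_iff.mpr (Or.inr ⟨subset_rfl, Set.subset_union_left⟩)
  have hext2 : SplitExtends S2' S2 := by
    rw [hS2def, hS2'def]
    exact splitExtends_pair_iff.mpr (Or.inl ⟨Set.subset_union_left, subset_rfl⟩)
  have hext3 : SplitExtends S3' S3 := by
    rw [hS3def, hS3'def]
    exact splitExtends_pair_iff.mpr (Or.inl ⟨Set.subset_union_left, subset_rfl⟩)
  -- the new splits are partial splits
  have hdisj1 : Disjoint (B2 ∩ B3) A1 := Set.disjoint_left.mpr fun x hx hxA =>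
    Set.notMem_empty x (hy4 ▸ (⟨⟨hxA, hx.1⟩, hx.2⟩ : x ∈ A1 ∩ B2 ∩ B3))
  have hdisj2 : Disjoint (A1 ∩ B3) B2 := Set.disjoint_left.mpr fun x hx hxB =>
    Set.notMem_empty x (hy4 ▸ (⟨⟨hx.1, hxB⟩, hx.2⟩ : x ∈ A1 ∩ B2 ∩ B3))
  have hdisj3 : Disjoint (A1 ∩ B2) B3 := Set.disjoint_left.mpr fun x hx hxB =>
    Set.notMem_empty x (hy4 ▸ (⟨hx, hxB⟩ : x ∈ A1 ∩ B2 ∩ B3))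
  have hps1' : IsPartialSplit S1' :=
    ⟨_, _, hS1'def, hB1.mono Set.subset_union_left, hA1,
      Set.disjoint_union_left.mpr ⟨hd1.symm, hdisj1⟩⟩
  have hps2' : IsPartialSplit S2' :=
    ⟨_, _, hS2'def, hA2.mono Set.subset_union_left, hB2,
      Set.disjoint_union_left.mpr ⟨hd2, hdisj2⟩⟩
  have hps3' : IsPartialSplit S3' :=
    ⟨_, _, hS3'def, hA3.mono Set.subset_union_left, hB3,
      Set.disjoint_union_left.mpr ⟨hd3, hdisj3⟩⟩
  -- facts about Sig'
  have hsub' : ∀ T ∈ Sig', T ∈ Sig ∪ yOut A1 B1 A2 B2 A3 B3 := by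
    intro T hT
    rw [hSig'] at hT
    exact hT.1
  have hirr : ∀ T ∈ Sig', ∀ U ∈ Sig ∪ yOut A1 B1 A2 B2 A3 B3,
      U ≠ T → ¬ SplitExtends U T := by
    intro T hT U hU hne hext
    rw [hSig'] at hT
    exact hT.2 ⟨U, hU, hne, hext⟩
  -- the reassignment map
  set g : Sym2 (Set X) → Sym2 (Set X) := fun T =>
    if T = S1' ∧ T ∉ Sig then S1
    else if T = S2' ∧ T ∉ Sig then S2
    else if T = S3' ∧ T ∉ Sig then S3
    else T with hgdef
  have hg_mem : ∀ T ∈ Sig, g T = T := by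
    intro T hT
    simp only [hgdef]
    rw [if_neg (fun h => h.2 hT), if_neg (fun h => h.2 hT), if_neg (fun h => h.2 hT)]
  have hg_out : ∀ T, T ∉ Sig → T ∈ yOut A1 B1 A2 B2 A3 B3 →
      (g T = S1 ∧ T = S1') ∨ (g T = S2 ∧ T = S2') ∨ (g T = S3 ∧ T = S3') := by
    intro T hT hTy
    by_cases h1 : T = S1'
    · exact Or.inl ⟨by simp only [hgdef]; rw [if_pos ⟨h1, hT⟩], h1⟩
    · by_cases h2 : T = S2'
      · exact Or.inr (Or.inl ⟨by
          simp only [hgdef]; rw [if_neg (fun h => h1 h.1), if_pos ⟨h2, hT⟩], h2⟩)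
      · have h3 : T = S3' := by
          rcases (hyout_mem T).mp hTy with h | h | h <;> tauto
        exact Or.inr (Or.inr ⟨by
          simp only [hgdef]
          rw [if_neg (fun h => h1 h.1), if_neg (fun h => h2 h.1), if_pos ⟨h3, hT⟩], h3⟩)
  have hg_maps : ∀ T ∈ Sig', g T ∈ Sig := by
    intro T hT
    by_cases hTS : T ∈ Sig
    · rw [hg_mem T hTS]; exact hTS
    · rcases hg_out T hTS ((hsub' T hT).resolve_left hTS) with ⟨h, _⟩ | ⟨h, _⟩ | ⟨h, _⟩ <;>
        rw [h] <;> assumption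
  have hg_le : ∀ T ∈ Sig', sdefic T ≤ sdefic (g T) := by
    intro T hT
    by_cases hTS : T ∈ Sig
    · rw [hg_mem T hTS]
    · rcases hg_out T hTS ((hsub' T hT).resolve_left hTS) with ⟨h, h'⟩ | ⟨h, h'⟩ | ⟨h, h'⟩ <;>
        rw [h, h']
      · exact sdefic_le_of_extends hext1
      · exact sdefic_le_of_extends hext2
      · exact sdefic_le_of_extends hext3
  have hg_inj : ∀ T ∈ Sig', ∀ U ∈ Sig', g T = g U → T = U := by
    have key : ∀ T ∈ Sig', ∀ U ∈ Sig', T ∈ Sig → U ∉ Sig → g T = g U → T = U := by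
      intro T hT U hU hTS hUS heq
      rw [hg_mem T hTS] at heq
      exfalso
      rcases hg_out U hUS ((hsub' U hU).resolve_left hUS) with ⟨h, hU'⟩ | ⟨h, hU'⟩ | ⟨h, hU'⟩
      · exact hirr T hT U (hsub' U hU) (fun q => hUS (by rw [q]; exact hTS))
          (by rw [hU', heq.trans h]; exact hext1)
      · exact hirr T hT U (hsub' U hU) (fun q => hUS (by rw [q]; exact hTS))
          (by rw [hU', heq.trans h]; exact hext2)
      · exact hirr T hT U (hsub' U hU) (fun q => hUS (by rw [q]; exact hTS))
          (by rw [hU', heq.trans h]; exact hext3)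
    intro T hT U hU heq
    by_cases hTS : T ∈ Sig <;> by_cases hUS : U ∈ Sig
    · rw [hg_mem T hTS, hg_mem U hUS] at heq; exact heq
    · exact key T hT U hU hTS hUS heq
    · exact (key U hU T hT hUS hTS heq.symm).symm
    · rcases hg_out T hTS ((hsub' T hT).resolve_left hTS) with ⟨h, hT'⟩ | ⟨h, hT'⟩ | ⟨h, hT'⟩ <;>
        rcases hg_out U hUS ((hsub' U hU).resolve_left hUS) with ⟨h2, hU'⟩ | ⟨h2, hU'⟩ | ⟨h2, hU'⟩ <;>
        first
          | exact hT'.trans hU'.symm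
          | · exfalso
              have hSS := (h.symm.trans heq).trans h2
              first
                | exact hne12 hSS
                | exact hne13 hSS
                | exact hne23 hSS
                | exact hne12 hSS.symm
                | exact hne13 hSS.symm
                | exact hne23 hSS.symm
  -- the bad new split
  obtain ⟨Sstar, hSstar_mem, hSbad⟩ :
      ∃ S ∈ sreduce (yOut A1 B1 A2 B2 A3 B3), ∀ T ∈ Sig, ¬ SplitExtends T S := by
    by_contra hcon
    push_neg at hcon
    exact hnt hcon
  have hSy : Sstar ∈ yOut A1 B1 A2 B2 A3 B3 := hSstar_mem.1
  have hSpN0 : Sstar ∉ Sig := fun h => hSbad Sstar h (splitExtends_refl Sstar)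
  obtain ⟨Sp, Ss, hSpBad, hSpN, hSpy, hSsMem, hextPS, hpsSp, hgSp, huniq⟩ :
      ∃ Sp Ss : Sym2 (Set X),
        (∀ T ∈ Sig, ¬ SplitExtends T Sp) ∧ Sp ∉ Sig ∧
        Sp ∈ yOut A1 B1 A2 B2 A3 B3 ∧ Ss ∈ Sig ∧ SplitExtends Sp Ss ∧
        IsPartialSplit Sp ∧ g Sp = Ss ∧
        (∀ T, T ∉ Sig → T ∈ yOut A1 B1 A2 B2 A3 B3 → g T = Ss → T = Sp) := by
    by_cases c1 : Sstar = S1'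
    · subst c1
      refine ⟨S1', S1, hSbad, hSpN0, hSy, hm1, hext1, hps1', ?_, ?_⟩
      · simp only [hgdef]; rw [if_pos ⟨trivial, hSpN0⟩]
      · intro T hT hTy hgT
        rcases hg_out T hT hTy with ⟨h, h'⟩ | ⟨h, h'⟩ | ⟨h, h'⟩
        · exact h'
        · exact absurd (h.symm.trans hgT).symm hne12
        · exact absurd (h.symm.trans hgT).symm hne13
    · by_cases c2 : Sstar = S2'
      · subst c2
        refine ⟨S2', S2, hSbad, hSpN0, hSy, hm2, hext2, hps2', ?_, ?_⟩
        · simp only [hgdef]; rw [if_neg (fun h => c1 h.1), if_pos ⟨trivial, hSpN0⟩]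
        · intro T hT hTy hgT
          rcases hg_out T hT hTy with ⟨h, h'⟩ | ⟨h, h'⟩ | ⟨h, h'⟩
          · exact absurd (h.symm.trans hgT) hne12
          · exact h'
          · exact absurd (h.symm.trans hgT).symm hne23
      · have c3 : Sstar = S3' := by
          rcases (hyout_mem Sstar).mp hSy with h | h | h <;> tauto
        subst c3
        refine ⟨S3', S3, hSbad, hSpN0, hSy, hm3, hext3, hps3', ?_, ?_⟩
        · simp only [hgdef]
          rw [if_neg (fun h => c1 h.1), if_neg (fun h => c2 h.1), if_pos ⟨trivial, hSpN0⟩]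
        · intro T hT hTy hgT
          rcases hg_out T hT hTy with ⟨h, h'⟩ | ⟨h, h'⟩ | ⟨h, h'⟩
          · exact absurd (h.symm.trans hgT) hne13
          · exact absurd (h.symm.trans hgT) hne23
          · exact h'
  have hSpne : Sp ≠ Ss := fun q =>
    hSpBad Ss hSsMem (by rw [q]; exact splitExtends_refl Ss)
  have hSsN' : Ss ∉ Sig' := fun hmem =>
    hirr Ss hmem Sp (Set.mem_union_right _ hSpy) hSpne hextPS
  have hlt : sdefic Sp < sdefic Ss := sdefic_lt_of_extends_ne hpsSp hextPS hSpne
  -- now convert to finite sums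
  have hfinS : Sig.Finite := Set.toFinite _
  have hfinS' : Sig'.Finite := Set.toFinite _
  have hψ : (∑ᶠ S ∈ Sig, sdefic S) = ∑ S ∈ hfinS.toFinset, sdefic S := by
    rw [← finsum_mem_coe_finset, hfinS.coe_toFinset]
  have hψ' : (∑ᶠ S ∈ Sig', sdefic S) = ∑ S ∈ hfinS'.toFinset, sdefic S := by
    rw [← finsum_mem_coe_finset, hfinS'.coe_toFinset]
  rw [hψ, hψ']
  have himsub : hfinS'.toFinset.image g ⊆ hfinS.toFinset := by
    intro T hT
    rw [Finset.mem_image] at hT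
    obtain ⟨U, hU, rfl⟩ := hT
    rw [Set.Finite.mem_toFinset]
    exact hg_maps U ((Set.Finite.mem_toFinset _).mp hU)
  have hinj : ∀ x ∈ hfinS'.toFinset, ∀ y ∈ hfinS'.toFinset, g x = g y → x = y :=
    fun x hx y hy => hg_inj x ((Set.Finite.mem_toFinset _).mp hx) y
      ((Set.Finite.mem_toFinset _).mp hy)
  have himage := Finset.sum_image (f := sdefic) hinj
  by_cases hin : Sp ∈ Sig'
  · calc (∑ S ∈ hfinS'.toFinset, sdefic S)
        < ∑ S ∈ hfinS'.toFinset, sdefic (g S) :=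
          Finset.sum_lt_sum (fun i hi => hg_le i ((Set.Finite.mem_toFinset _).mp hi))
            ⟨Sp, (Set.Finite.mem_toFinset _).mpr hin, by rw [hgSp]; exact hlt⟩
      _ = ∑ S ∈ hfinS'.toFinset.image g, sdefic S := himage.symm
      _ ≤ ∑ S ∈ hfinS.toFinset, sdefic S := Finset.sum_le_sum_of_subset himsub
  · have hSsnotim : Ss ∉ hfinS'.toFinset.image g := by
      intro hmem
      rw [Finset.mem_image] at hmem
      obtain ⟨U, hU, hgU⟩ := hmem
      have hU' : U ∈ Sig' := (Set.Finite.mem_toFinset _).mp hU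
      by_cases hUS : U ∈ Sig
      · rw [hg_mem U hUS] at hgU
        exact hSsN' (hgU ▸ hU')
      · exact hin ((huniq U hUS ((hsub' U hU').resolve_left hUS) hgU) ▸ hU')
    calc (∑ S ∈ hfinS'.toFinset, sdefic S)
        ≤ ∑ S ∈ hfinS'.toFinset, sdefic (g S) :=
          Finset.sum_le_sum (fun i hi => hg_le i ((Set.Finite.mem_toFinset _).mp hi))
      _ = ∑ S ∈ hfinS'.toFinset.image g, sdefic S := himage.symm
      _ < ∑ S ∈ hfinS.toFinset, sdefic S :=
          Finset.sum_lt_sum_of_subset himsub ((Set.Finite.mem_toFinset _).mpr hSsMem)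
            hSsnotim (lt_of_le_of_lt (Nat.zero_le _) hlt) (fun j _ _ => Nat.zero_le _)

end Statement17Step

/-- the length `n` of any split closure sequence for a weakly compatible
`Σ ∈ P(X)` with respect to the `Y`-rule is at most `|Σ|·|X| − ∑_{A|B ∈ Σ} |A ∪ B|`. -/
theorem statement17 {X : Type*} [Fintype X] (Sig : Set (Sym2 (Set X)))
    (hPX : InPX Sig) (hwc : WeaklyCompatible Sig)
    (n : ℕ) (f : ℕ → Set (Sym2 (Set X)))
    (hseq : IsClosureSeq WeaklyCompatible yStepNT Sig n f)
    (hlast : (WeaklyCompatible (f n) ∧ yClosed (f n)) ∨ ¬ WeaklyCompatible (f n)) :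
    n ≤ Sig.ncard * Nat.card X - ∑ᶠ S ∈ Sig, (splitGround S).ncard := by
  classical
  obtain ⟨hf0, hPXi, hstep⟩ := hseq
  have hdec : ∀ i, i < n → (∑ᶠ S ∈ f (i + 1), sdefic S) < ∑ᶠ S ∈ f i, sdefic S :=
    fun i hi => ystep_sum_lt (hPXi i hi.le) ((hstep i hi).2.1)
  have hmono : ∀ i, i ≤ n → (∑ᶠ S ∈ f i, sdefic S) + i ≤ ∑ᶠ S ∈ f 0, sdefic S := by
    intro i
    induction i with
    | zero => simp
    | succ k ih =>
      intro hi
      have h1 := hdec k (by omega)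
      have h2 := ih (by omega)
      omega
  have hn := hmono n le_rfl
  rw [hf0] at hn
  have hfin : Sig.Finite := Set.toFinite _
  have hψ : (∑ᶠ S ∈ Sig, sdefic S) = ∑ S ∈ hfin.toFinset, sdefic S := by
    rw [← finsum_mem_coe_finset, hfin.coe_toFinset]
  have hγ : (∑ᶠ S ∈ Sig, (splitGround S).ncard) = ∑ S ∈ hfin.toFinset, (splitGround S).ncard := by
    rw [← finsum_mem_coe_finset, hfin.coe_toFinset]
  have hle : ∀ S ∈ hfin.toFinset, (splitGround S).ncard ≤ Nat.card X :=
    fun S _ => splitGround_ncard_le S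
  have hsplit : (∑ S ∈ hfin.toFinset, sdefic S) + ∑ S ∈ hfin.toFinset, (splitGround S).ncard
      = hfin.toFinset.card * Nat.card X := by
    rw [← Finset.sum_add_distrib,
      Finset.sum_congr rfl (fun S hS =>
        show sdefic S + (splitGround S).ncard = Nat.card X from
          Nat.sub_add_cancel (hle S hS)),
      Finset.sum_const, smul_eq_mul]
  have hcard : Sig.ncard = hfin.toFinset.card := Set.ncard_eq_toFinset_card Sig hfin
  rw [hcard, hγ]
  rw [hψ] at hn
  omega
end
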